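/- arXiv:1701.03856 — 5 statements merged into one kernel-verified Lean document; each statement's English description precedes it below -/
import Mathlib

section
/- Let r ≥ 3 be an integer and let G be a 2r-regular simple graph on n vertices, and let u, v be distinct vertices lying in the same connected component of G. Then the number of 2-edge-cuts of G that separate u and v is at most n²/(4r+2)². -/
/-!
Send a 2-edge-cut `F` separating `u` from `v` to the set `S` of vertices still reachable from `u`
in `G - F`. Every degree is even, so every cut has even size and a cut separating `u` from `v`
has at least two edges; hence the boundary of `S` is exactly `F`, and `F ↦ S` is injective.

By submodularity of the cut function, these sides form a lattice `L` of sets, and no edge joins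
`A \ B` to `B \ A` for `A, B ∈ L`. Counting boundary edges over the Venn regions of three sides
shows that no three sides can each have a private vertex. Consequently the join-irreducible
sides (the least side containing a given vertex) have width two; by Dilworth they lie on two
chains of total length `m`, and a side is determined by how far up each chain it reaches, so
`4 |L| ≤ (m + 2)²`. Finally, in a `2r`-regular graph with `r ≥ 3` a nonempty set with at most four
boundary edges has more than `2r` vertices. This applies to every side, to its complement and to
the difference of two nested sides, so stacking the irreducibles gives `(m + 2)(2r + 1) ≤ n`.
-/

open scoped Classical

open Finset

section TwoChains

variable {α : Type*} [PartialOrder α]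

def IsTwoChainCover (s C₁ C₂ : Finset α) : Prop :=
  IsChain (· ≤ ·) (C₁ : Set α) ∧ IsChain (· ≤ ·) (C₂ : Set α) ∧ C₁ ∪ C₂ = s

lemma IsChain.le_of_le_or_le {C : Set α} (hC : IsChain (· ≤ ·) C) {a b x : α}
    (ha : a ∈ C) (hx : x ∈ C) (hab : ¬ a ≤ b) (hxab : x ≤ a ∨ x ≤ b) : x ≤ a :=
  (hC.total hx ha).elim id fun hax => hxab.elim id fun hxb => (hab (hax.trans hxb)).elim

lemma IsChain.ge_of_ge_or_ge {C : Set α} (hC : IsChain (· ≤ ·) C) {a b x : α}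
    (ha : a ∈ C) (hx : x ∈ C) (hba : ¬ b ≤ a) (hxab : a ≤ x ∨ b ≤ x) : a ≤ x :=
  (hC.total ha hx).elim id fun hxa => hxab.elim id fun hbx => (hba (hbx.trans hxa)).elim

lemma IsChain.union_of_le {C D : Set α} {a : α} (hC : IsChain (· ≤ ·) C)
    (hD : IsChain (· ≤ ·) D) (hCa : ∀ x ∈ C, x ≤ a) (hDa : ∀ y ∈ D, a ≤ y) :
    IsChain (· ≤ ·) (C ∪ D) :=
  isChain_union.2 ⟨hC, hD, fun x hx y hy _ => Or.inl ((hCa x hx).trans (hDa y hy))⟩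

lemma IsTwoChainCover.exists_mem_mem {s C₁ C₂ : Finset α} (h : IsTwoChainCover s C₁ C₂)
    {a b : α} (ha : a ∈ s) (hb : b ∈ s) (hab : IncompRel (· ≤ ·) a b) :
    ∃ Ca Cb, IsTwoChainCover s Ca Cb ∧ a ∈ Ca ∧ b ∈ Cb := by
  obtain ⟨h₁, h₂, rfl⟩ := h
  have hne : a ≠ b := fun e => hab.1 e.le
  have hsame {C : Finset α} (hC : IsChain (· ≤ ·) (C : Set α)) (haC : a ∈ C) (hbC : b ∈ C) :
      False := (hC haC hbC hne).elim hab.1 hab.2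
  rcases mem_union.1 ha with ha | ha <;> rcases mem_union.1 hb with hb | hb
  · exact (hsame h₁ ha hb).elim
  · exact ⟨C₁, C₂, ⟨h₁, h₂, rfl⟩, ha, hb⟩
  · exact ⟨C₂, C₁, ⟨h₂, h₁, union_comm _ _⟩, ha, hb⟩
  · exact (hsame h₂ ha hb).elim

lemma exists_isTwoChainCover_of_below_above {s : Finset α}
    (hs : ∀ a ∈ s, ∀ b ∈ s, ∀ c ∈ s,
      IncompRel (· ≤ ·) a b → IncompRel (· ≤ ·) a c → IncompRel (· ≤ ·) b c → False)
    {a b : α} (ha : a ∈ s) (hb : b ∈ s) (hab : IncompRel (· ≤ ·) a b)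
    (hD : ∃ C₁ C₂, IsTwoChainCover {x ∈ s | x ≤ a ∨ x ≤ b} C₁ C₂)
    (hU : ∃ C₁ C₂, IsTwoChainCover {x ∈ s | a ≤ x ∨ b ≤ x} C₁ C₂) :
    ∃ C₁ C₂, IsTwoChainCover s C₁ C₂ := by
  obtain ⟨C₁, C₂, hC⟩ := hD
  obtain ⟨Ca, Cb, ⟨hCa, hCb, hDcov⟩, haC, hbC⟩ :=
    hC.exists_mem_mem (by simp [ha]) (by simp [hb]) hab
  obtain ⟨E₁, E₂, hE⟩ := hU
  obtain ⟨Ea, Eb, ⟨hEa, hEb, hUcov⟩, haE, hbE⟩ :=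
    hE.exists_mem_mem (by simp [ha]) (by simp [hb]) hab
  have memD {x} (hx : x ∈ Ca ∪ Cb) : x ≤ a ∨ x ≤ b := by
    rw [hDcov] at hx; exact (mem_filter.1 hx).2
  have memU {x} (hx : x ∈ Ea ∪ Eb) : a ≤ x ∨ b ≤ x := by
    rw [hUcov] at hx; exact (mem_filter.1 hx).2
  refine ⟨Ca ∪ Ea, Cb ∪ Eb, ?_, ?_, ?_⟩
  · rw [coe_union]
    refine hCa.union_of_le hEa (a := a) (fun x hx => ?_) fun y hy => ?_
    · exact hCa.le_of_le_or_le haC hx hab.1 (memD (mem_union_left _ hx))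
    · exact hEa.ge_of_ge_or_ge haE hy hab.2 (memU (mem_union_left _ hy))
  · rw [coe_union]
    refine hCb.union_of_le hEb (a := b) (fun x hx => ?_) fun y hy => ?_
    · exact hCb.le_of_le_or_le hbC hx hab.2 (memD (mem_union_right _ hx)).symm
    · exact hEb.ge_of_ge_or_ge hbE hy hab.1 (memU (mem_union_right _ hy)).symm
  · have hDU : {x ∈ s | x ≤ a ∨ x ≤ b} ∪ {x ∈ s | a ≤ x ∨ b ≤ x} = s := by
      refine (union_subset (filter_subset _ _) (filter_subset _ _)).antisymm fun x hx => ?_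
      by_contra hxDU
      simp only [mem_union, mem_filter, not_or, not_and_or] at hxDU
      exact hs x hx a ha b hb ⟨by tauto, by tauto⟩ ⟨by tauto, by tauto⟩ hab
    rw [← hDU, ← hDcov, ← hUcov]
    ac_rfl

/-- `s` minus a minimal element and a maximal element above it is a chain. -/
lemma exists_isTwoChainCover_of_below_or_above {s : Finset α} (hne : s.Nonempty)
    (hs : ∀ a ∈ s, ∀ b ∈ s, IncompRel (· ≤ ·) a b →
      {x ∈ s | x ≤ a ∨ x ≤ b} ≠ s → {x ∈ s | a ≤ x ∨ b ≤ x} = s) :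
    ∃ C₁ C₂, IsTwoChainCover s C₁ C₂ := by
  obtain ⟨m, hm⟩ := s.exists_minimal hne
  obtain ⟨M, hmM, hM⟩ := s.exists_le_maximal hm.prop
  refine ⟨(s.erase m).erase M, {m, M}, ?_, by simpa using IsChain.pair hmM, ?_⟩
  · intro x hx y hy hxy
    by_contra hinc
    obtain ⟨⟨hxs, hxm⟩, hxM⟩ : (x ∈ s ∧ x ≠ m) ∧ x ≠ M := by simpa using hx
    obtain ⟨⟨hys, hym⟩, hyM⟩ : (y ∈ s ∧ y ≠ m) ∧ y ≠ M := by simpa using hy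
    by_cases hD : {z ∈ s | z ≤ x ∨ z ≤ y} = s
    · obtain h | h : M ≤ x ∨ M ≤ y := (mem_filter.1 (hD ▸ hM.prop : M ∈ _)).2
      · exact hxM (hM.eq_of_le hxs h).symm
      · exact hyM (hM.eq_of_le hys h).symm
    · have hU := hs x hxs y hys (not_or.1 hinc) hD
      obtain h | h : x ≤ m ∨ y ≤ m := (mem_filter.1 (hU ▸ hm.prop : m ∈ _)).2
      · exact hxm (hm.eq_of_le hxs h)
      · exact hym (hm.eq_of_le hys h)
  · ext x
    by_cases hxm : x = m
    · simp [hxm, hm.prop]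
    by_cases hxM : x = M
    · simp [hxM, hM.prop]
    simp [hxm, hxM]

/-- Dilworth's theorem for width two, by Perles' induction. -/
theorem Finset.exists_isTwoChainCover (s : Finset α)
    (hs : ∀ a ∈ s, ∀ b ∈ s, ∀ c ∈ s,
      IncompRel (· ≤ ·) a b → IncompRel (· ≤ ·) a c → IncompRel (· ≤ ·) b c → False) :
    ∃ C₁ C₂, IsTwoChainCover s C₁ C₂ := by
  induction s using Finset.strongInduction with
  | H s ih =>
  rcases s.eq_empty_or_nonempty with rfl | hne
  · exact ⟨∅, ∅, by simp [IsTwoChainCover]⟩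
  by_cases hsplit : ∃ a ∈ s, ∃ b ∈ s, IncompRel (· ≤ ·) a b ∧
      {x ∈ s | x ≤ a ∨ x ≤ b} ≠ s ∧ {x ∈ s | a ≤ x ∨ b ≤ x} ≠ s
  · obtain ⟨a, ha, b, hb, hab, hD, hU⟩ := hsplit
    have cover {t : Finset α} (hts : t ⊂ s) : ∃ C₁ C₂, IsTwoChainCover t C₁ C₂ :=
      ih t hts fun x hx y hy z hz => hs x (hts.subset hx) y (hts.subset hy) z (hts.subset hz)
    exact exists_isTwoChainCover_of_below_above hs ha hb hab
      (cover (ssubset_of_subset_of_ne (filter_subset _ _) hD))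
      (cover (ssubset_of_subset_of_ne (filter_subset _ _) hU))
  · push Not at hsplit
    exact exists_isTwoChainCover_of_below_or_above hne hsplit

end TwoChains

section ChainCount

variable {α : Type*} [PartialOrder α] [DecidableLE α]

lemma IsChain.filter_le_eq_of_card_eq {C : Finset α} (hC : IsChain (· ≤ ·) (C : Set α))
    {x y : α} (h : #{c ∈ C | c ≤ x} = #{c ∈ C | c ≤ y}) :
    {c ∈ C | c ≤ x} = {c ∈ C | c ≤ y} := by
  have hcomp : {c ∈ C | c ≤ x} ⊆ {c ∈ C | c ≤ y} ∨ {c ∈ C | c ≤ y} ⊆ {c ∈ C | c ≤ x} := by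
    by_contra! hne
    obtain ⟨c, hc, hcy⟩ := not_subset.1 hne.1
    obtain ⟨d, hd, hdx⟩ := not_subset.1 hne.2
    rw [mem_filter] at hc hd hcy hdx
    rcases hC.total hc.1 hd.1 with hcd | hdc
    · exact hcy ⟨hc.1, hcd.trans hd.2⟩
    · exact hdx ⟨hd.1, hdc.trans hc.2⟩
  rcases hcomp with hxy | hyx
  · exact eq_of_subset_of_card_le hxy h.ge
  · exact (eq_of_subset_of_card_le hyx h.le).symm

/-- By Dilworth `P` is covered by two disjoint chains, and an element of `L` is determined by how
many elements of each chain lie below it. -/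
theorem four_mul_card_le_of_injOn_filter_le {P L : Finset α}
    (hP : ∀ a ∈ P, ∀ b ∈ P, ∀ c ∈ P,
      IncompRel (· ≤ ·) a b → IncompRel (· ≤ ·) a c → IncompRel (· ≤ ·) b c → False)
    (hL : Set.InjOn (fun x => {p ∈ P | p ≤ x}) L) : 4 * #L ≤ (#P + 2) ^ 2 := by
  obtain ⟨C₁, C₂, hC₁, hC₂, hcov⟩ := P.exists_isTwoChainCover hP
  replace hC₂ : IsChain (· ≤ ·) ((C₂ \ C₁ : Finset α) : Set α) :=
    hC₂.mono (by simp)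
  rw [← union_sdiff_self_eq_union] at hcov
  have hcard : #L ≤ (#C₁ + 1) * (#(C₂ \ C₁) + 1) := by
    calc #L ≤ #(range (#C₁ + 1) ×ˢ range (#(C₂ \ C₁) + 1)) := by
          refine card_le_card_of_injOn (fun x => (#{c ∈ C₁ | c ≤ x}, #{c ∈ C₂ \ C₁ | c ≤ x}))
            (fun x _ => ?_) fun x hx y hy hxy => hL hx hy ?_
          · simp [card_filter_le]
          · simp only [Prod.mk.injEq] at hxy
            simp only [← hcov, filter_union, hC₁.filter_le_eq_of_card_eq hxy.1,
              hC₂.filter_le_eq_of_card_eq hxy.2]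
      _ = (#C₁ + 1) * (#(C₂ \ C₁) + 1) := by simp
  have hP : #P = #C₁ + #(C₂ \ C₁) := by rw [← hcov, card_union_of_disjoint disjoint_sdiff]
  calc 4 * #L ≤ 4 * (#C₁ + 1) * (#(C₂ \ C₁) + 1) := by rw [mul_assoc]; gcongr
    _ ≤ (#P + 2) ^ 2 := by rw [hP]; linarith [four_mul_le_sq_add (#C₁ + 1) (#(C₂ \ C₁) + 1)]

end ChainCount

namespace Finset

variable {α : Type*} [Fintype α] (L : Finset (Finset α))

/-- The least member of `L` containing `x`; it is `univ` when no member contains `x`. -/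
noncomputable def leastContaining (x : α) : Finset α := {S ∈ L | x ∈ S}.inf id

/-- The join-irreducible members of `L` other than its bottom `L.inf id`. -/
noncomputable def generators : Finset (Finset α) := (L.sup id \ L.inf id).image L.leastContaining

variable {L}

lemma mem_leastContaining (x : α) : x ∈ L.leastContaining x := by
  simp [leastContaining, mem_inf]

lemma leastContaining_subset {S : Finset α} {x : α} (hS : S ∈ L) (hx : x ∈ S) :
    L.leastContaining x ⊆ S :=
  inf_le (f := id) (mem_filter.2 ⟨hS, hx⟩)

lemma leastContaining_mem (hL : InfClosed (L : Set (Finset α))) {S : Finset α} {x : α}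
    (hS : S ∈ L) (hx : x ∈ S) : L.leastContaining x ∈ L :=
  hL.finsetInf_mem ⟨S, mem_filter.2 ⟨hS, hx⟩⟩ fun _ hT => (mem_filter.1 hT).1

lemma exists_of_mem_generators {p : Finset α} (hp : p ∈ L.generators) :
    ∃ x ∉ L.inf id, (∃ S ∈ L, x ∈ S) ∧ p = L.leastContaining x := by
  obtain ⟨x, hx, rfl⟩ := mem_image.1 hp
  obtain ⟨hx, hxB⟩ := mem_sdiff.1 hx
  obtain ⟨S, hS, hxS⟩ := mem_sup.1 hx
  exact ⟨x, hxB, ⟨S, hS, hxS⟩, rfl⟩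

lemma generators_subset (hL : InfClosed (L : Set (Finset α))) : L.generators ⊆ L := by
  intro p hp
  obtain ⟨x, -, ⟨S, hS, hxS⟩, rfl⟩ := exists_of_mem_generators hp
  exact leastContaining_mem hL hS hxS

lemma inf_union_sup_generators_eq {S : Finset α}
    (hS : S ∈ L) : L.inf id ∪ {p ∈ L.generators | p ⊆ S}.sup id = S := by
  refine union_subset (inf_le (f := id) hS) (Finset.sup_le fun p hp => (mem_filter.1 hp).2)
    |>.antisymm fun x hxS => ?_
  by_cases hxB : x ∈ L.inf id
  · exact mem_union_left _ hxB
  refine mem_union_right _ (mem_sup.2 ⟨L.leastContaining x, ?_, mem_leastContaining x⟩)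
  refine mem_filter.2 ⟨mem_image.2 ⟨x, ?_, rfl⟩, leastContaining_subset hS hxS⟩
  exact mem_sdiff.2 ⟨mem_sup.2 ⟨S, hS, hxS⟩, hxB⟩

lemma injOn_filter_generators_subset :
    Set.InjOn (fun S => {p ∈ L.generators | p ⊆ S}) L := fun S hS T hT hST => by
  rw [← inf_union_sup_generators_eq hS, ← inf_union_sup_generators_eq hT]
  exact congrArg (fun Q => L.inf id ∪ Q.sup id) hST

lemma sdiff_union_nonempty_of_mem_generators
    {p q r : Finset α} (hp : p ∈ L.generators) (hq : q ∈ L) (hr : r ∈ L)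
    (hpq : ¬ p ⊆ q) (hpr : ¬ p ⊆ r) : (p \ (q ∪ r)).Nonempty := by
  obtain ⟨x, -, -, rfl⟩ := exists_of_mem_generators hp
  refine ⟨x, mem_sdiff.2 ⟨mem_leastContaining x, fun hx => ?_⟩⟩
  rcases mem_union.1 hx with hxq | hxr
  · exact hpq (leastContaining_subset hq hxq)
  · exact hpr (leastContaining_subset hr hxr)

lemma not_incompRel_generators (hL : InfClosed (L : Set (Finset α)))
    (hL₃ : ∀ A ∈ L, ∀ B ∈ L, ∀ C ∈ L, (A \ (B ∪ C)).Nonempty → (B \ (A ∪ C)).Nonempty →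
      (C \ (A ∪ B)).Nonempty → False) :
    ∀ a ∈ L.generators, ∀ b ∈ L.generators, ∀ c ∈ L.generators,
      IncompRel (· ≤ ·) a b → IncompRel (· ≤ ·) a c → IncompRel (· ≤ ·) b c → False := by
  intro a ha b hb c hc hab hac hbc
  have hL' := generators_subset hL
  exact hL₃ a (hL' ha) b (hL' hb) c (hL' hc)
    (sdiff_union_nonempty_of_mem_generators ha (hL' hb) (hL' hc) hab.1 hac.1)
    (sdiff_union_nonempty_of_mem_generators hb (hL' ha) (hL' hc) hab.2 hbc.1)
    (sdiff_union_nonempty_of_mem_generators hc (hL' ha) (hL' hb) hac.2 hbc.2)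

/-- Adding the generators in order of size makes the union grow strictly: a generator contained in
a union of generators is contained in one of them, hence equal to it if it is the largest. -/
lemma inf_union_sup_mem_and_card_le (hL : IsSublattice (L : Set (Finset α))) (hne : L.Nonempty)
    {g : ℕ} (hcard : ∀ A ∈ L, g ≤ #A) (hgap : ∀ A ∈ L, ∀ B ∈ L, A ⊂ B → g ≤ #(B \ A))
    {Q : Finset (Finset α)} (hQ : Q ⊆ L.generators) :
    L.inf id ∪ Q.sup id ∈ L ∧ (#Q + 1) * g ≤ #(L.inf id ∪ Q.sup id) := by
  have hgen := generators_subset hL.infClosed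
  revert hQ
  refine induction_on_max_value (fun A => #A) Q (fun _ => ?_) fun a Q haQ hmax ih hQ => ?_
  · have hB := hL.infClosed.finsetInf_mem hne fun _ hA => hA
    simpa using ⟨hB, hcard _ hB⟩
  obtain ⟨hU, hUcard⟩ := ih ((subset_insert a Q).trans hQ)
  have ha := hQ (mem_insert_self a Q)
  have hU' : L.inf id ∪ (insert a Q).sup id = a ∪ (L.inf id ∪ Q.sup id) := by
    rw [sup_insert, id, union_left_comm]; rfl
  have hssub : L.inf id ∪ Q.sup id ⊂ a ∪ (L.inf id ∪ Q.sup id) := by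
    refine ssubset_of_subset_of_ne subset_union_right fun heq => ?_
    obtain ⟨x, hxB, -, rfl⟩ := exists_of_mem_generators ha
    have hx : x ∈ L.inf id ∪ Q.sup id := heq ▸ mem_union_left _ (mem_leastContaining x)
    obtain ⟨b, hb, hxb⟩ := mem_sup.1 ((mem_union.1 hx).resolve_left hxB)
    have hsub := leastContaining_subset (hgen (hQ (mem_insert_of_mem hb))) hxb
    exact haQ (eq_of_subset_of_card_le hsub (hmax b hb) ▸ hb)
  have hmem : a ∪ (L.inf id ∪ Q.sup id) ∈ L := hL.supClosed (hgen ha) hU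
  rw [hU']
  refine ⟨hmem, ?_⟩
  have := hgap _ hU _ hmem hssub
  have := card_sdiff_add_card_eq_card hssub.subset
  rw [card_insert_of_notMem haQ]
  nlinarith

theorem four_mul_card_mul_sq_le (hL : IsSublattice (L : Set (Finset α))) {g : ℕ}
    (hcard : ∀ A ∈ L, g ≤ #A) (hcompl : ∀ A ∈ L, g ≤ #Aᶜ)
    (hgap : ∀ A ∈ L, ∀ B ∈ L, A ⊂ B → g ≤ #(B \ A))
    (hL₃ : ∀ A ∈ L, ∀ B ∈ L, ∀ C ∈ L, (A \ (B ∪ C)).Nonempty → (B \ (A ∪ C)).Nonempty →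
      (C \ (A ∪ B)).Nonempty → False) :
    4 * #L * g ^ 2 ≤ Fintype.card α ^ 2 := by
  rcases L.eq_empty_or_nonempty with rfl | hne
  · simp
  have hwidth : 4 * #L ≤ (#L.generators + 2) ^ 2 :=
    four_mul_card_le_of_injOn_filter_le (not_incompRel_generators hL.infClosed hL₃)
      (injOn_filter_generators_subset (L := L))
  obtain ⟨hU, hUcard⟩ := inf_union_sup_mem_and_card_le hL hne hcard hgap subset_rfl
  have hchain : (#L.generators + 2) * g ≤ Fintype.card α := by
    have := hcompl _ hU
    rw [← card_add_card_compl (L.inf id ∪ L.generators.sup id)]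
    linarith
  calc 4 * #L * g ^ 2 ≤ ((#L.generators + 2) * g) ^ 2 := by rw [mul_pow]; gcongr
    _ ≤ Fintype.card α ^ 2 := by gcongr

end Finset

namespace SimpleGraph

variable {V : Type*} (G : SimpleGraph V)

lemma not_adj_of_interedges_eq_empty {s t : Finset V} (h : G.interedges s t = ∅) {x y : V}
    (hx : x ∈ s) (hy : y ∈ t) : ¬ G.Adj x y := fun hxy =>
  (eq_empty_iff_forall_notMem.1 h) (x, y) ((G.mk_mem_interedges_iff).2 ⟨hx, hy, hxy⟩)

variable [Fintype V]

noncomputable def cutSize (S : Finset V) : ℕ := #(G.interedges S Sᶜ)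

lemma card_interedges_eq_sum (s t : Finset V) :
    #(G.interedges s t) = ∑ x, ∑ y, if G.Adj x y ∧ x ∈ s ∧ y ∈ t then 1 else 0 := by
  rw [← Fintype.sum_prod_type' (f := fun x y => if G.Adj x y ∧ x ∈ s ∧ y ∈ t then 1 else 0),
    ← card_filter]
  congr 1
  ext ⟨x, y⟩
  simp [mk_mem_interedges_iff, and_comm, and_assoc]

lemma degree_eq_sum (x : V) : G.degree x = ∑ y, if G.Adj x y then 1 else 0 := by
  rw [← card_neighborFinset_eq_degree, neighborFinset_eq_filter, card_filter]

lemma sum_degree_eq (S : Finset V) :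
    ∑ x ∈ S, G.degree x = #(G.interedges S S) + G.cutSize S := by
  rw [← sum_ite_mem_eq]
  simp only [cutSize, card_interedges_eq_sum, degree_eq_sum, ← sum_add_distrib]
  refine sum_congr rfl fun x _ => ?_
  split_ifs with hx
  · exact sum_congr rfl fun y _ => by by_cases y ∈ S <;> simp [*]
  · simp [hx]

lemma even_card_interedges_self (S : Finset V) : Even #(G.interedges S S) := by
  let H : SimpleGraph V :=
    { Adj x y := G.Adj x y ∧ x ∈ S ∧ y ∈ S
      symm := ⟨fun _ _ h => ⟨h.1.symm, h.2.2, h.2.1⟩⟩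
      loopless := ⟨fun _ h => G.irrefl h.1⟩ }
  have : G.interedges S S = univ.filter fun (x, y) ↦ H.Adj x y := by
    ext ⟨x, y⟩
    simp [H, mk_mem_interedges_iff]
    tauto
  rw [this, ← H.two_mul_card_edgeFinset]
  exact even_two_mul _

lemma even_cutSize (hG : ∀ v, Even (G.degree v)) (S : Finset V) : Even (G.cutSize S) := by
  have hsum : Even (∑ x ∈ S, G.degree x) := even_sum _ fun x _ => hG x
  rw [sum_degree_eq] at hsum
  exact (Nat.even_add.1 hsum).1 (G.even_card_interedges_self S)

lemma cutSize_pos {S : Finset V} {x y : V} (hx : x ∈ S) (hy : y ∉ S) (hxy : G.Reachable x y) :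
    0 < G.cutSize S := by
  obtain ⟨p⟩ := hxy
  obtain ⟨d, -, hd₁, hd₂⟩ := p.exists_boundary_dart (S : Set V) hx hy
  exact card_pos.2 ⟨_, (G.mk_mem_interedges_iff).2 ⟨hd₁, mem_compl.2 hd₂, d.adj⟩⟩

lemma two_le_cutSize (hG : ∀ v, Even (G.degree v)) {S : Finset V} {x y : V} (hx : x ∈ S)
    (hy : y ∉ S) (hxy : G.Reachable x y) : 2 ≤ G.cutSize S := by
  obtain ⟨k, hk⟩ := G.even_cutSize hG S
  have := G.cutSize_pos hx hy hxy
  omega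

lemma cutSize_compl (S : Finset V) : G.cutSize Sᶜ = G.cutSize S := by
  rw [cutSize, cutSize, compl_compl]
  have := G.symm
  exact Rel.card_interedges_comm _ _

lemma lt_card_of_cutSize_lt {d : ℕ} (hG : G.IsRegularOfDegree d) {S : Finset V}
    (hS : S.Nonempty) (h : G.cutSize S < d) : d < #S := by
  have hsum := G.sum_degree_eq S
  rw [sum_congr rfl fun x _ => hG x, sum_const, smul_eq_mul] at hsum
  have hin : #(G.interedges S S) ≤ #S * #S - #S := by
    rw [← offDiag_card]
    refine card_le_card fun ⟨x, y⟩ hxy => ?_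
    obtain ⟨hx, hy, hadj⟩ := (G.mk_mem_interedges_iff).1 hxy
    exact mem_offDiag.2 ⟨hx, hy, hadj.ne⟩
  have hk := card_pos.2 hS
  have := Nat.sub_add_cancel (Nat.le_mul_self #S)
  by_contra! hle
  nlinarith

lemma cutSize_inter_add_cutSize_union (A B : Finset V) :
    G.cutSize (A ∩ B) + G.cutSize (A ∪ B) + #(G.interedges (A \ B) (B \ A)) +
      #(G.interedges (B \ A) (A \ B)) = G.cutSize A + G.cutSize B := by
  simp only [cutSize, card_interedges_eq_sum, ← sum_add_distrib]
  refine sum_congr rfl fun x _ => sum_congr rfl fun y _ => ?_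
  by_cases G.Adj x y <;> by_cases x ∈ A <;> by_cases x ∈ B <;> by_cases y ∈ A <;>
    by_cases y ∈ B <;> simp [*]

lemma cutSize_sdiff_le (A B : Finset V) : G.cutSize (B \ A) ≤ G.cutSize A + G.cutSize B := by
  have := G.cutSize_inter_add_cutSize_union B Aᶜ
  rw [cutSize_compl, ← sdiff_eq_inter_compl] at this
  omega

lemma two_mul_cutSize (S : Finset V) :
    2 * G.cutSize S = ∑ x, ∑ y, if G.Adj x y ∧ (x ∈ S ↔ y ∉ S) then 1 else 0 := by
  conv_lhs => rw [two_mul]; enter [1]; rw [← cutSize_compl]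
  simp only [cutSize, card_interedges_eq_sum, ← sum_add_distrib]
  refine sum_congr rfl fun x _ => sum_congr rfl fun y _ => ?_
  by_cases G.Adj x y <;> by_cases x ∈ S <;> by_cases y ∈ S <;> simp [*]

/-- Count each edge in both directions (`two_mul_cutSize`). Since no edge joins `A \ B` to
`B \ A` (nor `A \ C` to `C \ A`, `B \ C` to `C \ B`), the Venn regions of its endpoints are
nested, and then the edge crosses at most as many of the four sets on the left as of `A`, `B`, `C`.
-/
lemma cutSize_private_add_le {A B C : Finset V}
    (hAB : G.interedges (A \ B) (B \ A) = ∅) (hAC : G.interedges (A \ C) (C \ A) = ∅)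
    (hBC : G.interedges (B \ C) (C \ B) = ∅) :
    G.cutSize (A \ (B ∪ C)) + G.cutSize (B \ (A ∪ C)) + G.cutSize (C \ (A ∪ B)) +
      G.cutSize (A ∩ B ∩ C) ≤ G.cutSize A + G.cutSize B + G.cutSize C := by
  refine Nat.le_of_mul_le_mul_left ?_ two_pos
  simp only [mul_add, two_mul_cutSize, ← sum_add_distrib]
  refine sum_le_sum fun x _ => sum_le_sum fun y _ => ?_
  by_cases hxy : G.Adj x y
  swap; · simp [hxy]
  have h₁ := fun hx hy => G.not_adj_of_interedges_eq_empty hAB hx hy hxy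
  have h₂ := fun hx hy => G.not_adj_of_interedges_eq_empty hAB hy hx hxy.symm
  have h₃ := fun hx hy => G.not_adj_of_interedges_eq_empty hAC hx hy hxy
  have h₄ := fun hx hy => G.not_adj_of_interedges_eq_empty hAC hy hx hxy.symm
  have h₅ := fun hx hy => G.not_adj_of_interedges_eq_empty hBC hx hy hxy
  have h₆ := fun hx hy => G.not_adj_of_interedges_eq_empty hBC hy hx hxy.symm
  simp only [mem_sdiff] at h₁ h₂ h₃ h₄ h₅ h₆
  by_cases x ∈ A <;> by_cases x ∈ B <;> by_cases x ∈ C <;> by_cases y ∈ A <;>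
    by_cases y ∈ B <;> by_cases y ∈ C <;> simp_all

lemma injOn_mk_interedges_compl (S : Finset V) :
    Set.InjOn (fun p : V × V => s(p.1, p.2)) (G.interedges S Sᶜ) := by
  rintro ⟨x, y⟩ hxy ⟨x', y'⟩ hxy' h
  rw [mem_coe, mk_mem_interedges_iff, mem_compl] at hxy hxy'
  rcases Sym2.eq_iff.1 h with ⟨rfl, rfl⟩ | ⟨rfl, -⟩
  · rfl
  · exact (hxy'.2.1 hxy.1).elim

lemma card_image_mk_interedges_compl (S : Finset V) :
    #((G.interedges S Sᶜ).image fun p => s(p.1, p.2)) = G.cutSize S :=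
  card_image_of_injOn (G.injOn_mk_interedges_compl S)

lemma image_mk_interedges_compl_subset {S : Finset V} {F : Set (Sym2 V)}
    (hF : ∀ x ∈ S, ∀ y ∉ S, G.Adj x y → s(x, y) ∈ F) :
    ↑((G.interedges S Sᶜ).image fun p => s(p.1, p.2)) ⊆ F := by
  intro e he
  obtain ⟨⟨x, y⟩, hxy, rfl⟩ := mem_image.1 (mem_coe.1 he)
  rw [mk_mem_interedges_iff, mem_compl] at hxy
  exact hF x hxy.1 y hxy.2.1 hxy.2.2

lemma cutSize_le_ncard {S : Finset V} {F : Set (Sym2 V)}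
    (hF : ∀ x ∈ S, ∀ y ∉ S, G.Adj x y → s(x, y) ∈ F) : G.cutSize S ≤ F.ncard := by
  rw [← card_image_mk_interedges_compl, ← Set.ncard_coe_finset]
  exact Set.ncard_le_ncard (G.image_mk_interedges_compl_subset hF)

lemma eq_image_mk_interedges_compl {S : Finset V} {F : Set (Sym2 V)}
    (hF : ∀ x ∈ S, ∀ y ∉ S, G.Adj x y → s(x, y) ∈ F) (hcard : F.ncard ≤ G.cutSize S) :
    F = ↑((G.interedges S Sᶜ).image fun p => s(p.1, p.2)) :=
  (Set.eq_of_subset_of_ncard_le (G.image_mk_interedges_compl_subset hF)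
    (by rwa [Set.ncard_coe_finset, card_image_mk_interedges_compl])).symm

noncomputable def reachableFinset (u : V) : Finset V := {w | G.Reachable u w}

@[simp]
lemma mem_reachableFinset {u w : V} : w ∈ G.reachableFinset u ↔ G.Reachable u w := by
  simp [reachableFinset]

lemma mk_mem_of_mem_reachableFinset_deleteEdges (F : Set (Sym2 V)) (u : V) :
    ∀ x ∈ (G.deleteEdges F).reachableFinset u, ∀ y ∉ (G.deleteEdges F).reachableFinset u,
      G.Adj x y → s(x, y) ∈ F := by
  intro x hx y hy hxy
  rw [mem_reachableFinset] at hx hy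
  by_contra h
  exact hy (hx.trans (deleteEdges_adj.2 ⟨hxy, h⟩).reachable)

noncomputable def twoCutSides (u v : V) : Finset (Finset V) :=
  {S | u ∈ S ∧ v ∉ S ∧ (∀ x ∈ S, G.Reachable u x) ∧ G.cutSize S = 2}

variable {G} {u v : V}

lemma mem_twoCutSides {S : Finset V} :
    S ∈ G.twoCutSides u v ↔ u ∈ S ∧ v ∉ S ∧ (∀ x ∈ S, G.Reachable u x) ∧ G.cutSize S = 2 := by
  simp [twoCutSides]

lemma inter_mem_twoCutSides_and_union_mem_and_interedges_eq_empty
    (hG : ∀ w, Even (G.degree w)) (huv : G.Reachable u v) {A B : Finset V}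
    (hA : A ∈ G.twoCutSides u v) (hB : B ∈ G.twoCutSides u v) :
    A ∩ B ∈ G.twoCutSides u v ∧ A ∪ B ∈ G.twoCutSides u v ∧
      G.interedges (A \ B) (B \ A) = ∅ := by
  obtain ⟨huA, hvA, hrA, hcA⟩ := mem_twoCutSides.1 hA
  obtain ⟨huB, hvB, hrB, hcB⟩ := mem_twoCutSides.1 hB
  have hvAB : v ∉ A ∪ B := by simp [hvA, hvB]
  have hinter := G.two_le_cutSize hG (mem_inter.2 ⟨huA, huB⟩) (by simp [hvA]) huv
  have hunion := G.two_le_cutSize hG (mem_union_left B huA) hvAB huv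
  have := G.cutSize_inter_add_cutSize_union A B
  refine ⟨mem_twoCutSides.2 ⟨mem_inter.2 ⟨huA, huB⟩, by simp [hvA],
    fun x hx => hrA x (mem_inter.1 hx).1, by omega⟩, mem_twoCutSides.2 ⟨mem_union_left B huA,
    hvAB, fun x hx => (mem_union.1 hx).elim (hrA x) (hrB x), by omega⟩, card_eq_zero.1 (by omega)⟩

lemma isSublattice_twoCutSides (hG : ∀ w, Even (G.degree w)) (huv : G.Reachable u v) :
    IsSublattice (G.twoCutSides u v : Set (Finset V)) where
  supClosed _ hA _ hB :=
    (inter_mem_twoCutSides_and_union_mem_and_interedges_eq_empty hG huv hA hB).2.1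
  infClosed _ hA _ hB :=
    (inter_mem_twoCutSides_and_union_mem_and_interedges_eq_empty hG huv hA hB).1

lemma not_private_twoCutSides (hG : ∀ w, Even (G.degree w)) (huv : G.Reachable u v)
    {A B C : Finset V} (hA : A ∈ G.twoCutSides u v) (hB : B ∈ G.twoCutSides u v)
    (hC : C ∈ G.twoCutSides u v) (hPA : (A \ (B ∪ C)).Nonempty) (hPB : (B \ (A ∪ C)).Nonempty)
    (hPC : (C \ (A ∪ B)).Nonempty) : False := by
  have key {X Y : Finset V} (hX : X ∈ G.twoCutSides u v) (hY : Y ∈ G.twoCutSides u v) :=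
    (inter_mem_twoCutSides_and_union_mem_and_interedges_eq_empty hG huv hX hY).2.2
  have hsum := G.cutSize_private_add_le (key hA hB) (key hA hC) (key hB hC)
  obtain ⟨huA, hvA, hrA, hcA⟩ := mem_twoCutSides.1 hA
  obtain ⟨huB, -, hrB, hcB⟩ := mem_twoCutSides.1 hB
  obtain ⟨huC, -, hrC, hcC⟩ := mem_twoCutSides.1 hC
  have hT := G.two_le_cutSize hG (S := A ∩ B ∩ C) (by simp [huA, huB, huC]) (by simp [hvA]) huv
  have hprivate {P Q R : Finset V} (hP : ∀ x ∈ P, G.Reachable u x) (huQ : u ∈ Q)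
      (hPQR : (P \ (Q ∪ R)).Nonempty) : 2 ≤ G.cutSize (P \ (Q ∪ R)) := by
    obtain ⟨x, hx⟩ := hPQR
    exact G.two_le_cutSize hG hx (by simp [huQ]) (hP x (mem_sdiff.1 hx).1).symm
  have := hprivate hrA huB hPA
  have := hprivate hrB huA hPB
  have := hprivate hrC huA hPC
  omega

lemma four_mul_card_twoCutSides_mul_sq_le {r : ℕ} (hr : 3 ≤ r)
    (hG : G.IsRegularOfDegree (2 * r)) (huv : G.Reachable u v) :
    4 * #(G.twoCutSides u v) * (2 * r + 1) ^ 2 ≤ Fintype.card V ^ 2 := by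
  have hGeven : ∀ w, Even (G.degree w) := fun w => hG w ▸ even_two_mul r
  refine Finset.four_mul_card_mul_sq_le (isSublattice_twoCutSides hGeven huv)
    (fun A hA => ?_) (fun A hA => ?_) (fun A hA B hB hAB => ?_)
    fun A hA B hB C hC => not_private_twoCutSides hGeven huv hA hB hC
  · obtain ⟨huA, -, -, hcA⟩ := mem_twoCutSides.1 hA
    exact G.lt_card_of_cutSize_lt hG ⟨u, huA⟩ (by omega)
  · obtain ⟨-, hvA, -, hcA⟩ := mem_twoCutSides.1 hA
    exact G.lt_card_of_cutSize_lt hG ⟨v, mem_compl.2 hvA⟩ (by rw [cutSize_compl]; omega)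
  · have hcA := (mem_twoCutSides.1 hA).2.2.2
    have hcB := (mem_twoCutSides.1 hB).2.2.2
    have := G.cutSize_sdiff_le A B
    exact G.lt_card_of_cutSize_lt hG (sdiff_nonempty.2 hAB.2) (by omega)

lemma cutSize_reachableFinset_deleteEdges (hG : ∀ w, Even (G.degree w)) (huv : G.Reachable u v)
    {F : Set (Sym2 V)} (hF : F.ncard = 2) (hsep : ¬ (G.deleteEdges F).Reachable u v) :
    G.cutSize ((G.deleteEdges F).reachableFinset u) = 2 :=
  le_antisymm (hF ▸ G.cutSize_le_ncard (G.mk_mem_of_mem_reachableFinset_deleteEdges F u))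
    (G.two_le_cutSize hG (by simp) (by simpa using hsep) huv)

lemma reachableFinset_deleteEdges_mem_twoCutSides (hG : ∀ w, Even (G.degree w))
    (huv : G.Reachable u v) {F : Set (Sym2 V)} (hF : F.ncard = 2)
    (hsep : ¬ (G.deleteEdges F).Reachable u v) :
    (G.deleteEdges F).reachableFinset u ∈ G.twoCutSides u v :=
  mem_twoCutSides.2 ⟨by simp, by simpa using hsep,
    fun x hx => ((mem_reachableFinset _).1 hx).mono (G.deleteEdges_le F),
    cutSize_reachableFinset_deleteEdges hG huv hF hsep⟩

lemma injOn_reachableFinset_deleteEdges (hG : ∀ w, Even (G.degree w)) (huv : G.Reachable u v) :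
    Set.InjOn (fun F => (G.deleteEdges F).reachableFinset u)
      {F | F.ncard = 2 ∧ ¬ (G.deleteEdges F).Reachable u v} := by
  have hF {F : Set (Sym2 V)} (hF : F.ncard = 2 ∧ ¬ (G.deleteEdges F).Reachable u v) :=
    G.eq_image_mk_interedges_compl (G.mk_mem_of_mem_reachableFinset_deleteEdges F u)
      (by rw [cutSize_reachableFinset_deleteEdges hG huv hF.1 hF.2, hF.1])
  intro F hF₁ F' hF₂ hFF'
  rw [hF hF₁, hF hF₂]
  simp only at hFF'
  rw [hFF']

end SimpleGraph

open SimpleGraph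

theorem two_edge_cuts_bound_large_degree_general (r n : ℕ) (hr : 3 ≤ r)
    (G : SimpleGraph (Fin n)) (hreg : G.IsRegularOfDegree (2 * r))
    (u v : Fin n) (hreach : G.Reachable u v) :
    (Set.ncard {F : Set (Sym2 (Fin n)) | F ⊆ G.edgeSet ∧ F.ncard = 2 ∧
        ¬ (G.deleteEdges F).Reachable u v} : ℝ) ≤ (n : ℝ) ^ 2 / (4 * (r : ℝ) + 2) ^ 2 := by
  set cuts : Set (Set (Sym2 (Fin n))) :=
    {F | F ⊆ G.edgeSet ∧ F.ncard = 2 ∧ ¬ (G.deleteEdges F).Reachable u v}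
  have hG : ∀ w, Even (G.degree w) := fun w => hreg w ▸ even_two_mul r
  have hcuts : cuts.ncard ≤ #(G.twoCutSides u v) := by
    rw [← Set.ncard_coe_finset]
    exact Set.ncard_le_ncard_of_injOn _
      (fun F hF => reachableFinset_deleteEdges_mem_twoCutSides hG hreach hF.2.1 hF.2.2)
      ((injOn_reachableFinset_deleteEdges hG hreach).mono fun F hF => hF.2)
  have hsides := four_mul_card_twoCutSides_mul_sq_le hr hreg hreach
  rw [Fintype.card_fin] at hsides
  have hnat : cuts.ncard * (4 * r + 2) ^ 2 ≤ n ^ 2 :=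
    calc cuts.ncard * (4 * r + 2) ^ 2 = 4 * cuts.ncard * (2 * r + 1) ^ 2 := by ring
      _ ≤ 4 * #(G.twoCutSides u v) * (2 * r + 1) ^ 2 := by gcongr
      _ ≤ n ^ 2 := hsides
  rw [le_div_iff₀ (by positivity)]
  exact_mod_cast hnat

/-- Let `G` be a `2r`-regular simple graph on `n` vertices with `r ≥ 3`,
and let `u ≠ v` be vertices in the same connected component.  Then the number of
2-edge-cuts of `G` separating `u` and `v` is at most `n² / (4r+2)²`. -/
theorem two_edge_cuts_bound_large_degree (r n : ℕ) (hr : 3 ≤ r)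
    (G : SimpleGraph (Fin n)) (hreg : G.IsRegularOfDegree (2 * r))
    (u v : Fin n) (huv : u ≠ v) (hreach : G.Reachable u v) :
    (Set.ncard {F : Set (Sym2 (Fin n)) | F ⊆ G.edgeSet ∧ F.ncard = 2 ∧
        ¬ (G.deleteEdges F).Reachable u v} : ℝ) ≤ (n : ℝ) ^ 2 / (4 * (r : ℝ) + 2) ^ 2 :=
  two_edge_cuts_bound_large_degree_general r n hr G hreg u v hreach
end

section
/- Let G be a connected simple graph and let a, b, c, d be four distinct vertices such that ab, bc, cd are edges of G and ac, bd are not edges of G. Then the graph G′ obtained from G by deleting the edges ab and cd and adding the edges ac and bd is connected, and every vertex has the same degree in G′ as in G. -/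
/-!
Every edge of `G` stays reachable after the flip: `ab` and `cd` are replaced by the
paths `a c b` and `c b d`, whose edges `ac`, `bd` are added and `bc` is kept. Both the
deleted and the added edge pairs are perfect matchings of `{a, b, c, d}`, so every vertex
loses exactly as many incident edges as it gains.
-/

open scoped Classical

open Finset

namespace SimpleGraph

variable {V : Type*}

theorem Connected.of_forall_adj_reachable {G H : SimpleGraph V} (hG : G.Connected)
    (h : ∀ ⦃u v⦄, G.Adj u v → H.Reachable u v) : H.Connected := by
  have : Nonempty V := hG.nonempty
  refine ⟨fun u v => (reachable_iff_reflTransGen u v).mpr ?_⟩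
  exact Relation.reflTransGen_closed (fun x y hxy => (reachable_iff_reflTransGen x y).mp (h hxy))
    u v ((reachable_iff_reflTransGen u v).mp (hG.preconnected u v))

section EdgeSwap

variable [Fintype V] (G : SimpleGraph V) (D A : Finset (Sym2 V))

theorem incidenceFinset_deleteEdges_sup_fromEdgeSet (hA : ∀ e ∈ A, ¬e.IsDiag) (x : V) :
    (G.deleteEdges ↑D ⊔ fromEdgeSet ↑A).incidenceFinset x =
      G.incidenceFinset x \ D ∪ {e ∈ A | x ∈ e} := by
  ext e
  simp only [mem_incidenceFinset, incidenceSet, edgeSet_sup, edgeSet_deleteEdges,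
    edgeSet_fromEdgeSet, Set.mem_ofPred_eq, Set.mem_union, Set.mem_sdiff, mem_coe, mem_union,
    mem_sdiff, mem_filter, Sym2.mem_diagSet]
  grind

theorem degree_deleteEdges_sup_fromEdgeSet (hD : ↑D ⊆ G.edgeSet) (hA : Disjoint ↑A G.edgeSet)
    (hA_diag : ∀ e ∈ A, ¬e.IsDiag) (hDA : ∀ x, #{e ∈ D | x ∈ e} = #{e ∈ A | x ∈ e}) (x : V) :
    (G.deleteEdges ↑D ⊔ fromEdgeSet ↑A).degree x = G.degree x := by
  have hDx : D ∩ G.incidenceFinset x = {e ∈ D | x ∈ e} := by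
    ext e
    simp only [mem_inter, mem_filter, mem_incidenceFinset, incidenceSet, Set.mem_ofPred_eq]
    exact ⟨fun ⟨he, _, hx⟩ => ⟨he, hx⟩, fun ⟨he, hx⟩ => ⟨he, hD he, hx⟩⟩
  have hdisj : Disjoint (G.incidenceFinset x \ D) {e ∈ A | x ∈ e} :=
    Finset.disjoint_left.mpr fun e he he' => hA.notMem_of_mem_left (mem_filter.mp he').1
      ((mem_incidenceFinset ..).mp (mem_sdiff.mp he).1).1
  have hle : #{e ∈ D | x ∈ e} ≤ G.degree x := by
    rw [← hDx, ← card_incidenceFinset_eq_degree]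
    exact card_le_card inter_subset_right
  rw [← card_incidenceFinset_eq_degree, ← card_incidenceFinset_eq_degree,
    incidenceFinset_deleteEdges_sup_fromEdgeSet G D A hA_diag, card_union_of_disjoint hdisj,
    card_sdiff, hDx, ← hDA, card_incidenceFinset_eq_degree]
  omega

end EdgeSwap

def edgeFlip (G : SimpleGraph V) (a b c d : V) : SimpleGraph V :=
  G.deleteEdges {s(a, b), s(c, d)} ⊔ fromEdgeSet {s(a, c), s(b, d)}

section Flip

variable {G : SimpleGraph V} {a b c d : V}

theorem Connected.edgeFlip (hG : G.Connected) (hbc : G.Adj b c) (hac : a ≠ c) (hbd : b ≠ d) :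
    (G.edgeFlip a b c d).Connected := by
  have hac' : (G.edgeFlip a b c d).Adj a c := by simp [SimpleGraph.edgeFlip, hac]
  have hbd' : (G.edgeFlip a b c d).Adj b d := by simp [SimpleGraph.edgeFlip, hbd]
  have hbc' : (G.edgeFlip a b c d).Adj b c := by
    simp [SimpleGraph.edgeFlip, hbc, hbc.ne, hbc.ne.symm, hac.symm, hbd]
  refine hG.of_forall_adj_reachable fun u v huv => ?_
  by_cases h : s(u, v) = s(a, b) ∨ s(u, v) = s(c, d)
  · obtain (h | h) := h <;> rcases Sym2.eq_iff.mp h with ⟨rfl, rfl⟩ | ⟨rfl, rfl⟩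
    · exact hac'.reachable.trans hbc'.symm.reachable
    · exact hbc'.reachable.trans hac'.symm.reachable
    · exact hbc'.symm.reachable.trans hbd'.reachable
    · exact hbd'.symm.reachable.trans hbc'.reachable
  · exact Adj.reachable (by simp_all [SimpleGraph.edgeFlip])

theorem card_filter_mem_pair_eq_of_distinct (hab : a ≠ b) (hac : a ≠ c) (had : a ≠ d)
    (hbc : b ≠ c) (hbd : b ≠ d) (hcd : c ≠ d) (x : V) :
    #{e ∈ ({s(a, b), s(c, d)} : Finset (Sym2 V)) | x ∈ e} =
      #{e ∈ ({s(a, c), s(b, d)} : Finset (Sym2 V)) | x ∈ e} := by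
  simp only [filter_insert, filter_singleton, Sym2.mem_iff]
  by_cases xa : x = a <;> by_cases xb : x = b <;> by_cases xc : x = c <;> by_cases xd : x = d <;>
    subst_vars <;> simp_all

theorem degree_edgeFlip [Fintype V] (hab' : a ≠ b) (hac' : a ≠ c) (had' : a ≠ d) (hbc' : b ≠ c)
    (hbd' : b ≠ d) (hcd' : c ≠ d) (hab : G.Adj a b) (hcd : G.Adj c d) (hac : ¬G.Adj a c)
    (hbd : ¬G.Adj b d) (x : V) : (G.edgeFlip a b c d).degree x = G.degree x := by
  rw [SimpleGraph.edgeFlip, ← coe_pair, ← coe_pair]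
  -- `convert` reconciles the classical `DecidableRel` instance with `Sup.adjDecidable`.
  convert degree_deleteEdges_sup_fromEdgeSet G _ _ ?_ ?_ ?_
    (card_filter_mem_pair_eq_of_distinct hab' hac' had' hbc' hbd' hcd') x
  · simp [Set.insert_subset_iff, hab, hcd]
  · simp [Set.disjoint_left, hac, hbd]
  · simp [hac', hbd']

end Flip

end SimpleGraph

/-- Let `G` be a connected simple graph and let `a, b, c, d` be four
distinct vertices with `ab, bc, cd ∈ E(G)` and `ac, bd ∉ E(G)`.  Then the graph `G'`
obtained from `G` by deleting the edges `ab, cd` and adding the edges `ac, bd` (a *flip*)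
is connected, and every vertex has the same degree in `G'` as in `G`. -/
theorem flip_preserves_connectivity_and_degrees {V : Type*} [Fintype V]
    (G : SimpleGraph V) (hG : G.Connected)
    (a b c d : V)
    (hab' : a ≠ b) (hac' : a ≠ c) (had' : a ≠ d) (hbc' : b ≠ c) (hbd' : b ≠ d) (hcd' : c ≠ d)
    (hab : G.Adj a b) (hbc : G.Adj b c) (hcd : G.Adj c d)
    (hac : ¬ G.Adj a c) (hbd : ¬ G.Adj b d) :
    ((G.deleteEdges {s(a, b), s(c, d)}) ⊔
        SimpleGraph.fromEdgeSet {s(a, c), s(b, d)}).Connected ∧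
      ∀ x : V,
        ((G.deleteEdges {s(a, b), s(c, d)}) ⊔
            SimpleGraph.fromEdgeSet {s(a, c), s(b, d)}).degree x = G.degree x :=
  ⟨hG.edgeFlip hbc hac' hbd',
    SimpleGraph.degree_edgeFlip hab' hac' had' hbc' hbd' hcd' hab hcd hac hbd⟩
end

section
/- Let r ≥ 2 and n ≥ 2r+1, and let P_F be the transition matrix of the flip Markov chain on the set Ω_F of connected 2r-regular simple graphs on vertex set {1,…,n}. If x, y ∈ Ω_F are distinct states that differ by a flip replacing edges ab, cd with ac, bd, then: if exactly one of the edges bc, ad is present in x then P_F(x,y) = 2/((2r)³ n), and if both bc and ad are present in x then P_F(x,y) = 4/((2r)³ n). In particular P_F(x,y) = P_F(y,x) for all x, y ∈ Ω_F, so P_F is symmetric and the stationary distribution of the flip chain is uniform on Ω_F. -/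
open scoped Classical

noncomputable section

/-- The result of flipping on the 3-path `(a,b,c,d)`: delete `ab, cd`; add `ac, bd`. -/
def flipResult {n : ℕ} (G : SimpleGraph (Fin n)) (a b c d : Fin n) : SimpleGraph (Fin n) :=
  (G.deleteEdges {s(a, b), s(c, d)}) ⊔ SimpleGraph.fromEdgeSet {s(a, c), s(b, d)}

/-- The proposed flip along the walk `(a,b,c,d)` is accepted iff the four vertices are
distinct and neither `ac` nor `bd` is an edge. -/
def FlipAllowed {n : ℕ} (G : SimpleGraph (Fin n)) (a b c d : Fin n) : Prop :=
  a ≠ b ∧ a ≠ c ∧ a ≠ d ∧ b ≠ c ∧ b ≠ d ∧ c ≠ d ∧ ¬ G.Adj a c ∧ ¬ G.Adj b d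

/-- One step of the flip chain for the chosen walk `(a,b,c,d)`. -/
def flipStep {n : ℕ} (G : SimpleGraph (Fin n)) (a b c d : Fin n) : SimpleGraph (Fin n) :=
  if FlipAllowed G a b c d then flipResult G a b c d else G

/-- Transition probability of the flip chain on `Δ`-regular graphs: the chain picks one of
the `Δ³·n` walks `(a,b,c,d)` of length 3 uniformly at random and performs the
corresponding (possibly rejected) flip. -/
def flipProb (Δ : ℕ) {n : ℕ} (G G' : SimpleGraph (Fin n)) : ℝ :=
  (Set.ncard {w : Fin n × Fin n × Fin n × Fin n |
      G.Adj w.1 w.2.1 ∧ G.Adj w.2.1 w.2.2.1 ∧ G.Adj w.2.2.1 w.2.2.2 ∧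
      flipStep G w.1 w.2.1 w.2.2.1 w.2.2.2 = G'} : ℝ) / ((Δ : ℝ) ^ 3 * n)

lemma edgeSet_flipResult {n : ℕ} (G : SimpleGraph (Fin n)) {a b c d : Fin n}
    (hac : a ≠ c) (hbd : b ≠ d) :
    (flipResult G a b c d).edgeSet
      = (G.edgeSet \ {s(a,b), s(c,d)}) ∪ {s(a,c), s(b,d)} := by
  rw [flipResult, SimpleGraph.edgeSet_sup, SimpleGraph.edgeSet_deleteEdges,
      SimpleGraph.edgeSet_fromEdgeSet]
  congr 1
  ext e
  simp only [Set.mem_diff, Set.mem_insert_iff, Set.mem_singleton_iff, Set.mem_setOf_eq]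
  constructor
  · rintro ⟨h, _⟩; exact h
  · rintro (rfl | rfl)
    · exact ⟨Or.inl rfl, by simp [Sym2.mk_isDiag_iff, hac]⟩
    · exact ⟨Or.inr rfl, by simp [Sym2.mk_isDiag_iff, hbd]⟩

lemma flip_sdiff {n : ℕ} {x : SimpleGraph (Fin n)} {a b c d : Fin n}
    (hab' : a ≠ b) (hac' : a ≠ c) (had' : a ≠ d) (hbc' : b ≠ c) (hbd' : b ≠ d) (hcd' : c ≠ d)
    (hab : x.Adj a b) (hcd : x.Adj c d) (hac : ¬ x.Adj a c) (hbd : ¬ x.Adj b d) :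
    (flipResult x a b c d).edgeSet \ x.edgeSet = {s(a,c), s(b,d)} ∧
    x.edgeSet \ (flipResult x a b c d).edgeSet = {s(a,b), s(c,d)} := by
  rw [edgeSet_flipResult x hac' hbd']
  have h1 : s(a,b) ∈ x.edgeSet := hab
  have h2 : s(c,d) ∈ x.edgeSet := hcd
  have h3 : s(a,c) ∉ x.edgeSet := hac
  have h4 : s(b,d) ∉ x.edgeSet := hbd
  constructor <;> ext e <;>
    simp only [Set.mem_diff, Set.mem_union, Set.mem_insert_iff, Set.mem_singleton_iff]
  · constructor
    · rintro ⟨⟨he, _⟩ | h, hne⟩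
      · exact absurd he hne
      · exact h
    · rintro (rfl | rfl)
      · exact ⟨Or.inr (Or.inl rfl), h3⟩
      · exact ⟨Or.inr (Or.inr rfl), h4⟩
  · constructor
    · rintro ⟨he, hn⟩
      by_cases hcon : e = s(a,b) ∨ e = s(c,d)
      · exact hcon
      · exact absurd (Or.inl ⟨he, hcon⟩) hn
    · rintro (rfl | rfl)
      · refine ⟨h1, ?_⟩
        rintro (⟨_, hne⟩ | (h | h))
        · exact hne (Or.inl rfl)
        · rw [Sym2.eq_iff] at h; tauto
        · rw [Sym2.eq_iff] at h; tauto
      · refine ⟨h2, ?_⟩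
        rintro (⟨_, hne⟩ | (h | h))
        · exact hne (Or.inr rfl)
        · rw [Sym2.eq_iff] at h; tauto
        · rw [Sym2.eq_iff] at h; tauto

lemma flipResult_flipResult {n : ℕ} {x : SimpleGraph (Fin n)} {p q r s : Fin n}
    (hpq' : p ≠ q) (hpr' : p ≠ r) (hps' : p ≠ s) (hqr' : q ≠ r) (hqs' : q ≠ s) (hrs' : r ≠ s)
    (hpq : x.Adj p q) (hrs : x.Adj r s) (hpr : ¬ x.Adj p r) (hqs : ¬ x.Adj q s) :
    flipResult (flipResult x p q r s) p r q s = x := by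
  rw [← SimpleGraph.edgeSet_inj, edgeSet_flipResult _ hpq' hrs', edgeSet_flipResult x hpr' hqs']
  ext e
  simp only [Set.mem_diff, Set.mem_union, Set.mem_insert_iff, Set.mem_singleton_iff]
  constructor
  · rintro (⟨(⟨he, _⟩ | hA), hnA⟩ | (rfl | rfl))
    · exact he
    · exact absurd hA hnA
    · exact hpq
    · exact hrs
  · intro he
    by_cases hD : e = s(p,q) ∨ e = s(r,s)
    · exact Or.inr hD
    · refine Or.inl ⟨Or.inl ⟨he, hD⟩, ?_⟩
      rintro (rfl | rfl)
      · exact hpr ((SimpleGraph.mem_edgeSet _).mp he)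
      · exact hqs ((SimpleGraph.mem_edgeSet _).mp he)

lemma mem_walkSet_swap {n : ℕ} {x' y' : SimpleGraph (Fin n)} (hne : x' ≠ y')
    {p q r s : Fin n}
    (h : x'.Adj p q ∧ x'.Adj q r ∧ x'.Adj r s ∧ flipStep x' p q r s = y') :
    y'.Adj p r ∧ y'.Adj r q ∧ y'.Adj q s ∧ flipStep y' p r q s = x' := by
  obtain ⟨hpq, hqr, hrs, hstep⟩ := h
  have hFA : FlipAllowed x' p q r s := by
    by_contra hFA
    rw [flipStep, if_neg hFA] at hstep
    exact hne hstep
  obtain ⟨hpq', hpr', hps', hqr', hqs', hrs', hpr, hqs⟩ := hFA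
  rw [flipStep, if_pos ⟨hpq', hpr', hps', hqr', hqs', hrs', hpr, hqs⟩] at hstep
  subst hstep
  have hE := edgeSet_flipResult x' hpr' hqs'
  refine ⟨?_, ?_, ?_, ?_⟩
  · rw [← SimpleGraph.mem_edgeSet, hE]
    exact Or.inr (Or.inl rfl)
  · rw [← SimpleGraph.mem_edgeSet, hE]
    refine Or.inl ⟨hqr.symm, ?_⟩
    simp only [Set.mem_insert_iff, Set.mem_singleton_iff, Sym2.eq_iff]
    tauto
  · rw [← SimpleGraph.mem_edgeSet, hE]
    exact Or.inr (Or.inr rfl)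
  · have hFA2 : FlipAllowed (flipResult x' p q r s) p r q s := by
      refine ⟨hpr', hpq', hps', Ne.symm hqr', hrs', hqs', ?_, ?_⟩
      · intro h
        rw [← SimpleGraph.mem_edgeSet, hE] at h
        rcases h with ⟨_, hn⟩ | h
        · exact hn (Or.inl rfl)
        · simp only [Set.mem_insert_iff, Set.mem_singleton_iff, Sym2.eq_iff] at h; tauto
      · intro h
        rw [← SimpleGraph.mem_edgeSet, hE] at h
        rcases h with ⟨_, hn⟩ | h
        · exact hn (Or.inr rfl)
        · simp only [Set.mem_insert_iff, Set.mem_singleton_iff, Sym2.eq_iff] at h; tauto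
    rw [flipStep, if_pos hFA2]
    exact flipResult_flipResult hpq' hpr' hps' hqr' hqs' hrs' hpq hrs hpr hqs

lemma walkSet_char {n : ℕ} {x y : SimpleGraph (Fin n)} (hxy : x ≠ y)
    {a b c d : Fin n}
    (hab' : a ≠ b) (hac' : a ≠ c) (had' : a ≠ d) (hbc' : b ≠ c) (hbd' : b ≠ d) (hcd' : c ≠ d)
    (hab : x.Adj a b) (hcd : x.Adj c d) (hac : ¬ x.Adj a c) (hbd : ¬ x.Adj b d)
    (hflip : y = flipResult x a b c d) :
    {w : Fin n × Fin n × Fin n × Fin n |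
        x.Adj w.1 w.2.1 ∧ x.Adj w.2.1 w.2.2.1 ∧ x.Adj w.2.2.1 w.2.2.2 ∧
        flipStep x w.1 w.2.1 w.2.2.1 w.2.2.2 = y}
      = {w | (x.Adj b c ∧ (w = (a,b,c,d) ∨ w = (d,c,b,a))) ∨
             (x.Adj a d ∧ (w = (c,d,a,b) ∨ w = (b,a,d,c)))} := by
  have hd1 := flip_sdiff hab' hac' had' hbc' hbd' hcd' hab hcd hac hbd
  rw [← hflip] at hd1
  have hFA0 : FlipAllowed x a b c d := ⟨hab', hac', had', hbc', hbd', hcd', hac, hbd⟩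
  have hsetD : ∀ u v w z : Fin n, ({s(u,v), s(w,z)} : Set (Sym2 (Fin n))) = {s(v,u), s(z,w)} := by
    intro u v w z
    rw [show s(u,v) = s(v,u) from Sym2.eq_swap, show s(w,z) = s(z,w) from Sym2.eq_swap]
  have hrev : flipResult x d c b a = flipResult x a b c d := by
    unfold flipResult
    rw [show ({s(d,c), s(b,a)} : Set (Sym2 (Fin n))) = {s(a,b), s(c,d)} by
          rw [hsetD, Set.pair_comm],
        show ({s(d,b), s(c,a)} : Set (Sym2 (Fin n))) = {s(a,c), s(b,d)} by
          rw [hsetD, Set.pair_comm]]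
  have hswap : flipResult x c d a b = flipResult x a b c d := by
    unfold flipResult
    rw [show ({s(c,d), s(a,b)} : Set (Sym2 (Fin n))) = {s(a,b), s(c,d)} from Set.pair_comm _ _,
        show ({s(c,a), s(d,b)} : Set (Sym2 (Fin n))) = {s(a,c), s(b,d)} from hsetD _ _ _ _]
  have hswap2 : flipResult x b a d c = flipResult x a b c d := by
    unfold flipResult
    rw [show ({s(b,a), s(d,c)} : Set (Sym2 (Fin n))) = {s(a,b), s(c,d)} from hsetD _ _ _ _,
        show ({s(b,d), s(a,c)} : Set (Sym2 (Fin n))) = {s(a,c), s(b,d)} from Set.pair_comm _ _]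
  ext w
  obtain ⟨p, q, r, s⟩ := w
  simp only [Set.mem_setOf_eq]
  constructor
  · rintro ⟨hpq, hqr, hrs, hstep⟩
    have hFA : FlipAllowed x p q r s := by
      by_contra hFA
      rw [flipStep, if_neg hFA] at hstep
      exact hxy hstep
    obtain ⟨hpq', hpr', hps', hqr'', hqs', hrs', hpr, hqs⟩ := hFA
    rw [flipStep, if_pos ⟨hpq', hpr', hps', hqr'', hqs', hrs', hpr, hqs⟩] at hstep
    have hd2 := flip_sdiff hpq' hpr' hps' hqr'' hqs' hrs' hpq hrs hpr hqs
    rw [hstep] at hd2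
    have hDel : ({s(p,q), s(r,s)} : Set (Sym2 (Fin n))) = {s(a,b), s(c,d)} :=
      hd2.2.symm.trans hd1.2
    have hAdd : ({s(p,r), s(q,s)} : Set (Sym2 (Fin n))) = {s(a,c), s(b,d)} :=
      hd2.1.symm.trans hd1.1
    have h1 : s(p,q) ∈ ({s(a,b), s(c,d)} : Set (Sym2 (Fin n))) := by
      rw [← hDel]; exact Or.inl rfl
    have h2 : s(r,s) ∈ ({s(a,b), s(c,d)} : Set (Sym2 (Fin n))) := by
      rw [← hDel]; exact Or.inr rfl
    have h3 : s(p,r) ∈ ({s(a,c), s(b,d)} : Set (Sym2 (Fin n))) := by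
      rw [← hAdd]; exact Or.inl rfl
    simp only [Set.mem_insert_iff, Set.mem_singleton_iff, Sym2.eq_iff] at h1 h2 h3
    rcases h1 with (⟨rfl, rfl⟩ | ⟨rfl, rfl⟩) | (⟨rfl, rfl⟩ | ⟨rfl, rfl⟩)
    · -- p = a, q = b
      simp only [hab', hac', had', hbc', hbd', hcd',
        Ne.symm hab', Ne.symm hac', Ne.symm had', Ne.symm hbc', Ne.symm hbd', Ne.symm hcd',
        eq_self_iff_true, true_and, and_true, false_and, and_false, or_false, false_or] at h3
      subst h3
      simp only [hab', hac', had', hbc', hbd', hcd',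
        Ne.symm hab', Ne.symm hac', Ne.symm had', Ne.symm hbc', Ne.symm hbd', Ne.symm hcd',
        eq_self_iff_true, true_and, and_true, false_and, and_false, or_false, false_or] at h2
      subst h2
      exact Or.inl ⟨hqr, Or.inl rfl⟩
    · -- p = b, q = a
      simp only [hab', hac', had', hbc', hbd', hcd',
        Ne.symm hab', Ne.symm hac', Ne.symm had', Ne.symm hbc', Ne.symm hbd', Ne.symm hcd',
        eq_self_iff_true, true_and, and_true, false_and, and_false, or_false, false_or] at h3
      subst h3
      simp only [hab', hac', had', hbc', hbd', hcd',
        Ne.symm hab', Ne.symm hac', Ne.symm had', Ne.symm hbc', Ne.symm hbd', Ne.symm hcd',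
        eq_self_iff_true, true_and, and_true, false_and, and_false, or_false, false_or] at h2
      subst h2
      exact Or.inr ⟨hqr, Or.inr rfl⟩
    · -- p = c, q = d
      simp only [hab', hac', had', hbc', hbd', hcd',
        Ne.symm hab', Ne.symm hac', Ne.symm had', Ne.symm hbc', Ne.symm hbd', Ne.symm hcd',
        eq_self_iff_true, true_and, and_true, false_and, and_false, or_false, false_or] at h3
      subst h3
      simp only [hab', hac', had', hbc', hbd', hcd',
        Ne.symm hab', Ne.symm hac', Ne.symm had', Ne.symm hbc', Ne.symm hbd', Ne.symm hcd',
        eq_self_iff_true, true_and, and_true, false_and, and_false, or_false, false_or] at h2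
      subst h2
      exact Or.inr ⟨hqr.symm, Or.inl rfl⟩
    · -- p = d, q = c
      simp only [hab', hac', had', hbc', hbd', hcd',
        Ne.symm hab', Ne.symm hac', Ne.symm had', Ne.symm hbc', Ne.symm hbd', Ne.symm hcd',
        eq_self_iff_true, true_and, and_true, false_and, and_false, or_false, false_or] at h3
      subst h3
      simp only [hab', hac', had', hbc', hbd', hcd',
        Ne.symm hab', Ne.symm hac', Ne.symm had', Ne.symm hbc', Ne.symm hbd', Ne.symm hcd',
        eq_self_iff_true, true_and, and_true, false_and, and_false, or_false, false_or] at h2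
      subst h2
      exact Or.inl ⟨hqr.symm, Or.inr rfl⟩
  · rintro (⟨hbc1, (h | h)⟩ | ⟨had1, (h | h)⟩) <;>
      (simp only [Prod.mk.injEq] at h; obtain ⟨rfl, rfl, rfl, rfl⟩ := h)
    · exact ⟨hab, hbc1, hcd, by rw [flipStep, if_pos hFA0, ← hflip]⟩
    · refine ⟨hcd.symm, hbc1.symm, hab.symm, ?_⟩
      rw [flipStep, if_pos ⟨Ne.symm hcd', Ne.symm hbd', Ne.symm had', Ne.symm hbc',
        Ne.symm hac', Ne.symm hab', fun h => hbd h.symm, fun h => hac h.symm⟩, hrev, ← hflip]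
    · refine ⟨hcd, had1.symm, hab, ?_⟩
      rw [flipStep, if_pos ⟨hcd', Ne.symm hac', Ne.symm hbc', Ne.symm had', Ne.symm hbd', hab',
        fun h => hac h.symm, fun h => hbd h.symm⟩, hswap, ← hflip]
    · refine ⟨hab.symm, had1, hcd.symm, ?_⟩
      rw [flipStep, if_pos ⟨Ne.symm hab', hbd', hbc', had', hac', Ne.symm hcd', hbd, hac⟩,
        hswap2, ← hflip]

/-- Let `r ≥ 2`, `n ≥ 2r+1`, and let `P_F` be the transition matrix of
the flip chain on the set `Ω_F` of connected `2r`-regular simple graphs on `{1,…,n}`.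
If `x, y ∈ Ω_F` are distinct states that differ by a flip replacing the edges `ab, cd`
with `ac, bd`, then: if exactly one of the edges `bc, ad` is present in `x` then
`P_F(x,y) = 2/((2r)³n)`, and if both are present then `P_F(x,y) = 4/((2r)³n)`.
In particular `P_F(x,y) = P_F(y,x)` for all `x, y ∈ Ω_F`, so `P_F` is symmetric and the
stationary distribution of the flip chain is uniform on `Ω_F`. -/
theorem flip_transition_probabilities (r n : ℕ) (hr : 2 ≤ r) (hn : 2 * r + 1 ≤ n)
    (x y : SimpleGraph (Fin n))
    (hx : x.Connected) (hxreg : x.IsRegularOfDegree (2 * r))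
    (hy : y.Connected) (hyreg : y.IsRegularOfDegree (2 * r))
    (hxy : x ≠ y)
    (a b c d : Fin n)
    (hab' : a ≠ b) (hac' : a ≠ c) (had' : a ≠ d) (hbc' : b ≠ c) (hbd' : b ≠ d) (hcd' : c ≠ d)
    (hab : x.Adj a b) (hcd : x.Adj c d) (hac : ¬ x.Adj a c) (hbd : ¬ x.Adj b d)
    (hhub : x.Adj b c ∨ x.Adj a d)
    (hflip : y = flipResult x a b c d) :
    (((x.Adj b c ∧ ¬ x.Adj a d) ∨ (¬ x.Adj b c ∧ x.Adj a d)) →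
        flipProb (2 * r) x y = 2 / ((2 * r : ℝ) ^ 3 * n)) ∧
    ((x.Adj b c ∧ x.Adj a d) →
        flipProb (2 * r) x y = 4 / ((2 * r : ℝ) ^ 3 * n)) ∧
    (∀ x' y' : SimpleGraph (Fin n),
        x'.Connected → x'.IsRegularOfDegree (2 * r) →
        y'.Connected → y'.IsRegularOfDegree (2 * r) →
        flipProb (2 * r) x' y' = flipProb (2 * r) y' x') := by
  have key := walkSet_char hxy hab' hac' had' hbc' hbd' hcd' hab hcd hac hbd hflip
  have hden : ((2 * r : ℕ) : ℝ) ^ 3 * (n : ℝ) = (2 * r : ℝ) ^ 3 * n := by push_cast; ring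
  refine ⟨?_, ?_, ?_⟩
  · rintro (⟨hbc1, hnad⟩ | ⟨hnbc, had1⟩)
    · have hset : {w : Fin n × Fin n × Fin n × Fin n |
          x.Adj w.1 w.2.1 ∧ x.Adj w.2.1 w.2.2.1 ∧ x.Adj w.2.2.1 w.2.2.2 ∧
          flipStep x w.1 w.2.1 w.2.2.1 w.2.2.2 = y}
          = {((a,b,c,d) : Fin n × Fin n × Fin n × Fin n), (d,c,b,a)} := by
        rw [key]; ext w; simp [hbc1, hnad]
      rw [flipProb, hset, Set.ncard_pair (by simp [Prod.ext_iff, had']), hden]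
      norm_num
    · have hset : {w : Fin n × Fin n × Fin n × Fin n |
          x.Adj w.1 w.2.1 ∧ x.Adj w.2.1 w.2.2.1 ∧ x.Adj w.2.2.1 w.2.2.2 ∧
          flipStep x w.1 w.2.1 w.2.2.1 w.2.2.2 = y}
          = {((c,d,a,b) : Fin n × Fin n × Fin n × Fin n), (b,a,d,c)} := by
        rw [key]; ext w; simp [hnbc, had1]
      rw [flipProb, hset, Set.ncard_pair (by simp [Prod.ext_iff, Ne.symm hbc']), hden]
      norm_num
  · rintro ⟨hbc1, had1⟩
    have hset : {w : Fin n × Fin n × Fin n × Fin n |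
        x.Adj w.1 w.2.1 ∧ x.Adj w.2.1 w.2.2.1 ∧ x.Adj w.2.2.1 w.2.2.2 ∧
        flipStep x w.1 w.2.1 w.2.2.1 w.2.2.2 = y}
        = {((a,b,c,d) : Fin n × Fin n × Fin n × Fin n), (d,c,b,a), (c,d,a,b), (b,a,d,c)} := by
      rw [key]; ext w; simp only [Set.mem_setOf_eq, hbc1, had1, true_and,
        Set.mem_insert_iff, Set.mem_singleton_iff]
      tauto
    have hcard : ({((a,b,c,d) : Fin n × Fin n × Fin n × Fin n), (d,c,b,a), (c,d,a,b),
        (b,a,d,c)} : Set _).ncard = 4 := by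
      rw [Set.ncard_insert_of_notMem (by
            simp [Prod.ext_iff, hab', hac', had', hbc', hbd', hcd']),
          Set.ncard_insert_of_notMem (by
            simp [Prod.ext_iff, Ne.symm hcd', Ne.symm hbd', Ne.symm had']),
          Set.ncard_pair (by simp [Prod.ext_iff, Ne.symm hbc'])]
    rw [flipProb, hset, hcard, hden]
    norm_num
  · intro x' y' _ _ _ _
    by_cases hne : x' = y'
    · subst hne; rfl
    · have hmap : ∀ (G H : SimpleGraph (Fin n)), G ≠ H →
          ∀ w : Fin n × Fin n × Fin n × Fin n,
          w ∈ {w : Fin n × Fin n × Fin n × Fin n |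
              G.Adj w.1 w.2.1 ∧ G.Adj w.2.1 w.2.2.1 ∧ G.Adj w.2.2.1 w.2.2.2 ∧
              flipStep G w.1 w.2.1 w.2.2.1 w.2.2.2 = H} →
          (w.1, w.2.2.1, w.2.1, w.2.2.2) ∈ {w : Fin n × Fin n × Fin n × Fin n |
              H.Adj w.1 w.2.1 ∧ H.Adj w.2.1 w.2.2.1 ∧ H.Adj w.2.2.1 w.2.2.2 ∧
              flipStep H w.1 w.2.1 w.2.2.1 w.2.2.2 = G} := by
        intro G H hGH w hw
        exact mem_walkSet_swap hGH hw
      have hinv : Function.Involutive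
          (fun w : Fin n × Fin n × Fin n × Fin n => (w.1, w.2.2.1, w.2.1, w.2.2.2)) :=
        fun w => rfl
      have himg : {w : Fin n × Fin n × Fin n × Fin n |
            y'.Adj w.1 w.2.1 ∧ y'.Adj w.2.1 w.2.2.1 ∧ y'.Adj w.2.2.1 w.2.2.2 ∧
            flipStep y' w.1 w.2.1 w.2.2.1 w.2.2.2 = x'}
          = (fun w : Fin n × Fin n × Fin n × Fin n => (w.1, w.2.2.1, w.2.1, w.2.2.2)) ''
            {w : Fin n × Fin n × Fin n × Fin n |
            x'.Adj w.1 w.2.1 ∧ x'.Adj w.2.1 w.2.2.1 ∧ x'.Adj w.2.2.1 w.2.2.2 ∧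
            flipStep x' w.1 w.2.1 w.2.2.1 w.2.2.2 = y'} := by
        ext w
        constructor
        · intro hw
          exact ⟨(w.1, w.2.2.1, w.2.1, w.2.2.2),
            hmap y' x' (Ne.symm hne) w hw, hinv w⟩
        · rintro ⟨v, hv, rfl⟩
          exact hmap x' y' hne v hv
      rw [flipProb, flipProb, himg,
        Set.ncard_image_of_injective _ hinv.injective]

end
end

section
/- Let G be a simple graph in which every edge lies on a cycle, with connected components H_1, …, H_k where k ≥ 2. For each i ∈ {1,…,k} let e_i = v_i v_i' be an edge of H_i. Let G' be the graph obtained from G by deleting the edges e_1, …, e_k and adding the edges v_1' v_2, v_2' v_3, …, v_{k-1}' v_k, v_k' v_1. Then G' is a simple graph, G' is connected, and every vertex has the same degree in G' as in G. -/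
open scoped Classical

/-- The graph obtained from `G` by deleting the chosen edge `s(v i, v' i)` of each of the
`k` components and adding the chain edges `s(v' i, v (i+1))` (cyclically). -/
def chainedGraph {V : Type*} (G : SimpleGraph V) {k : ℕ} (hk : 0 < k)
    (v v' : Fin k → V) : SimpleGraph V :=
  (G.deleteEdges {e | ∃ i : Fin k, e = s(v i, v' i)}) ⊔
    SimpleGraph.fromEdgeSet
      {e | ∃ i : Fin k, e = s(v' i, v ⟨((i : ℕ) + 1) % k, Nat.mod_lt _ hk⟩)}

/-!
Write `f = v`, `g = v'` and let `σ` be the cyclic shift of `Fin k`, so that `G'` arises from `G`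
by deleting the edges `f i g i` and adding the edges `g i f (σ i)`.

Since `f i g i` is not a bridge, some walk from `f i` to `g i` avoids it; that walk stays in the
component of `f i`, so it avoids all the other deleted edges too, and deleting them changes no
reachability. The new edge `g i f (σ i)` then joins the component of `f i` to that of `f (σ i)`,
so `G'` is connected because `σ` is a single cycle.

Every vertex `x` lies on as many deleted as added edges, namely `#{i | f i = x} + #{i | g i = x}`
(`σ` permutes `{i | f i = x}`); the edges of either kind are pairwise distinct, and the added ones
are not in `G` because they join different components.
-/

open Function Set Equiv.Perm

section

variable {V ι : Type*}

lemma injective_sym2_mk_of_ne {a b : ι → V} (ha : Injective a) (hab : ∀ i j, a i ≠ b j) :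
    Injective fun i => s(a i, b i) := fun i j h => by
  rcases Sym2.eq_iff.mp h with ⟨h, -⟩ | ⟨h, -⟩
  exacts [ha h, absurd h (hab i j)]

lemma ncard_sep_mem_range_sym2 [Finite ι] {a b : ι → V} (ha : Injective a)
    (hab : ∀ i j, a i ≠ b j) (x : V) :
    {e ∈ range fun i => s(a i, b i) | x ∈ e}.ncard =
      {i | a i = x}.ncard + {i | b i = x}.ncard := by
  have himage : {e ∈ range fun i => s(a i, b i) | x ∈ e} =
      (fun i => s(a i, b i)) '' ({i | a i = x} ∪ {i | b i = x}) := by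
    ext e
    simp only [mem_range, mem_image, mem_union, mem_ofPred_eq]
    constructor
    · rintro ⟨⟨i, rfl⟩, hx⟩
      exact ⟨i, by simpa [eq_comm] using hx, rfl⟩
    · rintro ⟨i, hi, rfl⟩
      exact ⟨⟨i, rfl⟩, by rcases hi with hi | hi <;> simp [hi]⟩
  rw [himage, ncard_image_of_injective _ (injective_sym2_mk_of_ne ha hab), ncard_union_eq]
  exact Set.disjoint_left.mpr fun i (hai : a i = x) (hbi : b i = x) =>
    hab i i (hai.trans hbi.symm)

end

namespace SimpleGraph

variable {V ι : Type*}

def rewire (G : SimpleGraph V) (f g : ι → V) (σ : Equiv.Perm ι) : SimpleGraph V :=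
  G.deleteEdges (range fun i => s(f i, g i)) ⊔ fromEdgeSet (range fun i => s(g i, f (σ i)))

lemma Reachable.of_forall_adj {G H : SimpleGraph V}
    (hGH : ∀ ⦃a b⦄, G.Adj a b → H.Reachable a b)
    {x y : V} (h : G.Reachable x y) : H.Reachable x y := by
  rw [reachable_iff_reflTransGen] at h ⊢
  exact Relation.reflTransGen_closed (fun a b hab => (reachable_iff_reflTransGen a b).mp (hGH hab))
    _ _ h

lemma degree_deleteEdges_sup_fromEdgeSet_add [Finite V] (G : SimpleGraph V) {D A : Set (Sym2 V)}
    (hD : D ⊆ G.edgeSet) (hA : Disjoint A G.edgeSet) (hAdiag : ∀ e ∈ A, ¬e.IsDiag) (x : V)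
    [Fintype ((G.deleteEdges D ⊔ fromEdgeSet A).neighborSet x)] [Fintype (G.neighborSet x)] :
    (G.deleteEdges D ⊔ fromEdgeSet A).degree x + {e ∈ D | x ∈ e}.ncard =
      G.degree x + {e ∈ A | x ∈ e}.ncard := by
  have hdeg : ∀ (H : SimpleGraph V) [Fintype (H.neighborSet x)],
      H.degree x = (H.incidenceSet x).ncard := fun H _ => by
    rw [← card_incidenceSet_eq_degree, ← Nat.card_coe_set_eq, Nat.card_eq_fintype_card]
  have hinc : (G.deleteEdges D ⊔ fromEdgeSet A).incidenceSet x =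
      (G.incidenceSet x \ {e ∈ D | x ∈ e}) ∪ {e ∈ A | x ∈ e} := by
    ext e
    have := hAdiag e
    simp only [incidenceSet, edgeSet_sup, edgeSet_deleteEdges, edgeSet_fromEdgeSet, mem_union,
      mem_sdiff, mem_ofPred_eq, Sym2.mem_diagSet]
    tauto
  have hDx : {e ∈ D | x ∈ e} ⊆ G.incidenceSet x := fun e he => ⟨hD he.1, he.2⟩
  have hAx : Disjoint (G.incidenceSet x \ {e ∈ D | x ∈ e}) {e ∈ A | x ∈ e} :=
    hA.symm.mono (sdiff_subset.trans (incidenceSet_subset G x)) (sep_subset _ _)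
  rw [hdeg, hdeg, hinc, ncard_union_eq hAx, ← ncard_sdiff_add_ncard_of_subset hDx]
  omega

theorem degree_rewire [Finite V] {G : SimpleGraph V} {f g : ι → V} {σ : Equiv.Perm ι}
    (hadj : ∀ i, G.Adj (f i) (g i)) (hf : Injective f) (hg : Injective g)
    (hfg : ∀ i j, f i ≠ g j) (hnadj : ∀ i, ¬G.Adj (g i) (f (σ i))) (x : V)
    [Fintype ((G.rewire f g σ).neighborSet x)] [Fintype (G.neighborSet x)] :
    (G.rewire f g σ).degree x = G.degree x := by
  have := Finite.of_injective f hf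
  unfold rewire at *
  have hdeg := G.degree_deleteEdges_sup_fromEdgeSet_add (D := range fun i => s(f i, g i))
    (A := range fun i => s(g i, f (σ i))) (range_subset_iff.mpr hadj)
    (Set.disjoint_left.mpr <| by rintro _ ⟨i, rfl⟩; exact hnadj i)
    (by rintro _ ⟨i, rfl⟩; exact Sym2.mk_isDiag_iff.not.mpr (hfg (σ i) i).symm) x
  have hσ : {i | f (σ i) = x}.ncard = {i | f i = x}.ncard :=
    ncard_preimage_of_injective_subset_range (s := {i | f i = x}) σ.injective (by simp)
  rw [ncard_sep_mem_range_sym2 hf hfg, ncard_sep_mem_range_sym2 (b := fun i => f (σ i)) hg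
    (fun i j => (hfg (σ j) i).symm), hσ] at hdeg
  omega

lemma reachable_deleteEdges_range_of_not_isBridge {G : SimpleGraph V} {f g : ι → V}
    (hsep : Pairwise fun i j => ¬G.Reachable (f i) (f j)) {i : ι}
    (hi : ¬G.IsBridge s(f i, g i)) :
    (G.deleteEdges (range fun j => s(f j, g j))).Reachable (f i) (g i) := by
  obtain ⟨p, hp⟩ := reachable_deleteEdges_iff_exists_walk.mp (not_not.mp hi)
  refine ⟨p.transfer _ fun e he => ?_⟩
  rw [edgeSet_deleteEdges]
  refine ⟨p.edges_subset_edgeSet he, ?_⟩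
  rintro ⟨j, rfl⟩
  obtain rfl : i = j := by_contra fun hij =>
    hsep hij (p.takeUntil _ (p.fst_mem_support_of_mem_edges he)).reachable
  exact hp he

lemma Reachable.deleteEdges_range {G : SimpleGraph V} {f g : ι → V}
    (hbridge : ∀ i, ¬G.IsBridge s(f i, g i))
    (hsep : Pairwise fun i j => ¬G.Reachable (f i) (f j)) {x y : V} (h : G.Reachable x y) :
    (G.deleteEdges (range fun i => s(f i, g i))).Reachable x y := by
  refine h.of_forall_adj fun a b hab => ?_
  by_cases hD : s(a, b) ∈ range fun i => s(f i, g i)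
  · obtain ⟨i, hi⟩ := hD
    rcases Sym2.eq_iff.mp hi with ⟨rfl, rfl⟩ | ⟨rfl, rfl⟩
    · exact reachable_deleteEdges_range_of_not_isBridge hsep (hbridge i)
    · exact (reachable_deleteEdges_range_of_not_isBridge hsep (hbridge i)).symm
  · exact (deleteEdges_adj.mpr ⟨hab, hD⟩).reachable

lemma rewire_reachable_of_sameCycle [Finite ι] {G : SimpleGraph V} {f g : ι → V}
    {σ : Equiv.Perm ι} (hbridge : ∀ i, ¬G.IsBridge s(f i, g i))
    (hsep : Pairwise fun i j => ¬G.Reachable (f i) (f j)) {i j : ι} (h : σ.SameCycle i j) :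
    (G.rewire f g σ).Reachable (f i) (f j) := by
  have hstep : ∀ i, (G.rewire f g σ).Reachable (f i) (f (σ i)) := fun i => by
    refine ((reachable_deleteEdges_range_of_not_isBridge hsep (hbridge i)).mono
      le_sup_left).trans ?_
    by_cases hne : g i = f (σ i)
    · rw [hne]
    · exact Adj.reachable (Or.inr ⟨⟨i, rfl⟩, hne⟩)
  obtain ⟨n, -, rfl⟩ := h.exists_nat_pow_eq
  clear h
  induction n with
  | zero => rfl
  | succ n ih =>
    rw [pow_succ', Equiv.Perm.mul_apply]
    exact ih.trans (hstep _)

theorem rewire_connected [Finite ι] [Nonempty ι] {G : SimpleGraph V} {f g : ι → V}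
    {σ : Equiv.Perm ι} (hbridge : ∀ i, ¬G.IsBridge s(f i, g i))
    (hsep : Pairwise fun i j => ¬G.Reachable (f i) (f j)) (hσ : ∀ i j, σ.SameCycle i j)
    (hcover : ∀ x, ∃ i, G.Reachable x (f i)) : (G.rewire f g σ).Connected := by
  obtain ⟨i₀⟩ := ‹Nonempty ι›
  refine (connected_iff_exists_forall_reachable _).mpr ⟨f i₀, fun x => ?_⟩
  obtain ⟨i, hi⟩ := hcover x
  exact (rewire_reachable_of_sameCycle hbridge hsep (hσ i₀ i)).trans
    ((hi.deleteEdges_range hbridge hsep).mono le_sup_left).symm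

end SimpleGraph

lemma chainedGraph_eq_rewire {V : Type*} (G : SimpleGraph V) {k : ℕ} (hk : 0 < k)
    (v v' : Fin k → V) : chainedGraph G hk v v' = G.rewire v v' (finRotate k) := by
  obtain ⟨n, rfl⟩ : ∃ n, k = n + 1 := ⟨k - 1, by omega⟩
  have hsucc : ∀ i : Fin (n + 1),
      (⟨(i + 1) % (n + 1), Nat.mod_lt _ hk⟩ : Fin (n + 1)) = finRotate _ i := fun i => by
    ext
    simp [Fin.val_add]
  simp only [chainedGraph, SimpleGraph.rewire]
  congr 2 <;> ext e <;> simp only [Set.mem_ofPred_eq, Set.mem_range, eq_comm, hsucc]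

/-- Let `G` be a simple graph in which every edge lies on a cycle
(i.e. no edge is a bridge), with connected components `H_1, …, H_k`, `k ≥ 2`
(here `v i` is a vertex of `H_i`, the `v i` lie in pairwise distinct components, and every
vertex is in the component of some `v i`).  For each `i` let `e_i = (v i)(v' i)` be an
edge of `H_i`.  Then the graph `G'` obtained from `G` by deleting the edges `e_1, …, e_k`
and adding the cyclic chain edges `(v' 1)(v 2), …, (v' (k-1))(v k), (v' k)(v 1)` is a
simple graph which is connected, and every vertex has the same degree in `G'` as in `G`. -/
theorem chained_graph_connected_and_regular {V : Type*} [Fintype V]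
    (G : SimpleGraph V)
    (hcyc : ∀ e ∈ G.edgeSet, ¬ G.IsBridge e)
    (k : ℕ) (hk : 2 ≤ k)
    (v v' : Fin k → V)
    (hadj : ∀ i, G.Adj (v i) (v' i))
    (hsep : ∀ i j : Fin k, i ≠ j → ¬ G.Reachable (v i) (v j))
    (hcover : ∀ x : V, ∃ i : Fin k, G.Reachable x (v i)) :
    (chainedGraph G (by omega : 0 < k) v v').Connected ∧
      ∀ x : V, (chainedGraph G (by omega : 0 < k) v v').degree x = G.degree x := by
  have hcomp : ∀ {i j}, G.Reachable (v i) (v j) → i = j := fun h => by_contra (hsep _ _ · h)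
  have hv : Injective v := fun i j h => hcomp (h ▸ .rfl)
  have hv' : Injective v' := fun i j h =>
    hcomp ((hadj i).reachable.trans (h ▸ (hadj j).reachable.symm))
  have hvv' : ∀ i j, v i ≠ v' j := fun i j h => by
    obtain rfl := hcomp (h ▸ (hadj j).reachable.symm)
    exact (hadj i).ne h
  have hmoved : ∀ i, finRotate k i ≠ i := fun i =>
    mem_support.mp (by simp [support_finRotate_of_le hk])
  have hnadj : ∀ i, ¬G.Adj (v' i) (v (finRotate k i)) := fun i h =>
    hmoved i (hcomp ((hadj i).reachable.trans h.reachable)).symm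
  have : Nonempty (Fin k) := ⟨⟨0, by omega⟩⟩
  rw [chainedGraph_eq_rewire]
  exact ⟨SimpleGraph.rewire_connected (fun i => hcyc _ (hadj i)) (fun i j => hsep i j)
      (fun i j => (isCycle_finRotate_of_le hk).sameCycle (hmoved i) (hmoved j)) hcover,
    fun x => SimpleGraph.degree_rewire hadj hv hv' hvv' hnadj x⟩
end

section
/- Let r ≥ 2 and n ≥ max{8, 2r+1}, let Ω_S be the set of all 2r-regular simple graphs on vertex set {1,…,n} and Ω_F the subset of connected such graphs, and let h : Ω_S → Ω_F be the chaining map. Then for every G ∈ Ω_F, the number of preimages satisfies |h^{-1}(G)| ≤ 2rn. -/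
open scoped Classical

noncomputable section

/-- The entry vertex of a connected component: its highest-labelled vertex. -/
def entry {n : ℕ} (G : SimpleGraph (Fin n)) (C : G.ConnectedComponent) : Fin n :=
  (Set.toFinite C.supp).toFinset.max' (by
    obtain ⟨w, hw⟩ := C.exists_rep
    exact ⟨w, by
      simp only [Set.Finite.mem_toFinset, SimpleGraph.ConnectedComponent.mem_supp_iff]
      exact hw⟩)

/-- The exit vertex of a connected component: the highest-labelled neighbour of its
entry vertex. -/
def exitV {n : ℕ} (G : SimpleGraph (Fin n)) (C : G.ConnectedComponent) : Fin n :=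
  ((Set.toFinite (G.neighborSet (entry G C))).toFinset.max).getD (entry G C)

/-- The cyclic successor of a component in the ordering of components by entry vertex:
the component with least entry vertex among those with a larger entry vertex, wrapping
around to the component with the overall least entry vertex. -/
def nextComp {n : ℕ} (G : SimpleGraph (Fin n)) (C : G.ConnectedComponent) :
    G.ConnectedComponent :=
  letI : Fintype G.ConnectedComponent := Fintype.ofFinite _
  let bigger : Finset G.ConnectedComponent :=
    Finset.univ.filter fun D => entry G C < entry G D
  if hb : bigger.Nonempty then
    G.connectedComponentMk ((bigger.image (entry G)).min' (hb.image _))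
  else
    G.connectedComponentMk
      (((Finset.univ : Finset G.ConnectedComponent).image (entry G)).min'
        (by
          have : (Finset.univ : Finset G.ConnectedComponent).Nonempty :=
            ⟨C, Finset.mem_univ C⟩
          exact this.image _))

/-- The chaining map `h`: delete the bridge edge (entry–exit) of every component, and
add the chain edges from the exit vertex of each component to the entry vertex of the
next component in the cyclic order of components by entry vertex.  (For a connected
graph this returns the graph itself.) -/
def chainMap {n : ℕ} (G : SimpleGraph (Fin n)) : SimpleGraph (Fin n) :=
  (G.deleteEdges {e | ∃ C : G.ConnectedComponent, e = s(entry G C, exitV G C)}) ⊔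
    SimpleGraph.fromEdgeSet
      {e | ∃ C : G.ConnectedComponent, e = s(exitV G C, entry G (nextComp G C))}

/-
The map `GS ↦ (v_k', v_1)` sends every preimage of `G` to an ordered pair of `G`-adjacent
vertices, of which there are `2rn`, and it is injective on preimages. A connected preimage is `G`
itself and has `v_1 = n`, whereas `v_1 < n` for a disconnected one. If `GS` is disconnected, delete
the closing chain edge `v_k' v_1` from `G`: then `z` can be reached from `v_1` through vertices
`≤ t` exactly when the highest vertex of its component in `GS` is `≤ t`, because the remaining
chain edges lead from `H_i` only into `H_{i+1}`, and because a graph with all degrees even has no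
bridges, so that `H_i` stays connected without its bridge edge. Hence `G`, `v_k'` and `v_1`
determine the components of `GS`, and these determine `GS`: inside `H_i` it is `G` plus the edge
`v_i v_i'`, where `v_i'` is the only vertex of `H_i` other than `v_i` with a `G`-neighbour outside.
-/

namespace SimpleGraph

variable {V : Type*} {G : SimpleGraph V}

lemma ConnectedComponent.exists_ne_odd_degree_of_odd_degree [Fintype V] [DecidableRel G.Adj]
    (C : G.ConnectedComponent) {v : V} (hv : v ∈ C.supp) (hodd : Odd (G.degree v)) :
    ∃ w ∈ C.supp, w ≠ v ∧ Odd (G.degree w) := by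
  set S := C.toSimpleGraph.spanningCoe
  have hdeg : ∀ u ∈ C.supp, S.degree u = G.degree u := by
    intro u hu
    simp only [← card_neighborFinset_eq_degree]
    congr 1
    ext w
    simp [S, C.adj_spanningCoe_toSimpleGraph, hu]
  obtain ⟨w, hwv, hw⟩ := S.exists_ne_odd_degree_of_exists_odd_degree v (by rwa [hdeg v hv])
  obtain ⟨x, hx⟩ := S.degree_pos_iff_exists_adj w |>.mp hw.pos
  have hwC : w ∈ C.supp := (C.adj_spanningCoe_toSimpleGraph.mp hx).1
  exact ⟨w, hwC, hwv, by rwa [← hdeg w hwC]⟩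

lemma degree_deleteEdges_add_one [Fintype V] {x y : V} (hxy : G.Adj x y) :
    (G.deleteEdges {s(x, y)}).degree x + 1 = G.degree x := by
  simp only [← card_neighborFinset_eq_degree]
  rw [show (G.deleteEdges {s(x, y)}).neighborFinset x = (G.neighborFinset x).erase y by
    ext w; simp [hxy.ne, and_comm, eq_comm]]
  exact Finset.card_erase_add_one (by simpa using hxy)

lemma degree_deleteEdges_of_ne [Fintype V] {x y u : V} (hx : u ≠ x) (hy : u ≠ y) :
    (G.deleteEdges {s(x, y)}).degree u = G.degree u := by
  simp only [← card_neighborFinset_eq_degree]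
  congr 1
  ext w
  simp [hx, hy]

theorem not_isBridge_of_forall_even_degree [Fintype V] (heven : ∀ v, Even (G.degree v))
    {x y : V} (hxy : G.Adj x y) : ¬ G.IsBridge s(x, y) := by
  have hodd : ∀ u, Odd ((G.deleteEdges {s(x, y)}).degree u) → u = x ∨ u = y := by
    intro u hu
    by_contra! h
    rw [degree_deleteEdges_of_ne h.1 h.2] at hu
    exact Nat.not_odd_iff_even.mpr (heven u) hu
  have hy : Odd ((G.deleteEdges {s(x, y)}).degree y) := by
    have := degree_deleteEdges_add_one hxy.symm
    rw [Sym2.eq_swap] at this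
    exact Nat.not_even_iff_odd.mp (Nat.even_add_one.mp (this ▸ heven y))
  obtain ⟨w, hwC, hwy, hw⟩ :=
    ((G.deleteEdges {s(x, y)}).connectedComponentMk y).exists_ne_odd_degree_of_odd_degree
      (ConnectedComponent.mem_supp_iff _ _ |>.mpr rfl) hy
  obtain rfl : w = x := (hodd w hw).resolve_right hwy
  rw [isBridge_iff, not_not]
  exact ConnectedComponent.exact hwC

lemma Reachable.deleteEdges_of_not_isBridge {x y u v : V} (hb : ¬ G.IsBridge s(x, y))
    (h : G.Reachable u v) : (G.deleteEdges {s(x, y)}).Reachable u v := by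
  rw [isBridge_iff, not_not] at hb
  obtain ⟨p⟩ := h
  induction p with
  | nil => rfl
  | @cons a b _ hab _ ih =>
    refine Reachable.trans ?_ ih
    by_cases he : s(a, b) = s(x, y)
    · rcases Sym2.eq_iff.mp he with ⟨rfl, rfl⟩ | ⟨rfl, rfl⟩
      exacts [hb, hb.symm]
    · exact (deleteEdges_adj.mpr ⟨hab, he⟩).reachable

def ReachableWithin (G : SimpleGraph V) (s : Set V) (u v : V) : Prop :=
  ∃ p : G.Walk u v, ∀ x ∈ p.support, x ∈ s

namespace ReachableWithin

variable {s t : Set V} {u v w : V}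

lemma refl (hu : u ∈ s) : G.ReachableWithin s u u :=
  ⟨.nil, by simpa using hu⟩

lemma mono (hst : s ⊆ t) (h : G.ReachableWithin s u v) : G.ReachableWithin t u v :=
  let ⟨p, hp⟩ := h
  ⟨p, fun x hx => hst (hp x hx)⟩

lemma left_mem (h : G.ReachableWithin s u v) : u ∈ s :=
  let ⟨p, hp⟩ := h
  hp u p.start_mem_support

lemma trans (huv : G.ReachableWithin s u v) (hvw : G.ReachableWithin s v w) :
    G.ReachableWithin s u w := by
  obtain ⟨p, hp⟩ := huv
  obtain ⟨q, hq⟩ := hvw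
  refine ⟨p.append q, fun x hx => ?_⟩
  rcases (Walk.mem_support_append_iff p q).mp hx with hx | hx
  exacts [hp x hx, hq x hx]

lemma of_adj (h : G.Adj u v) (hu : u ∈ s) (hv : v ∈ s) : G.ReachableWithin s u v :=
  ⟨h.toWalk, by simp [hu, hv]⟩

lemma mem_of_adj_closed (ht : ∀ z w, z ∈ t → w ∈ s → G.Adj z w → w ∈ t) (hu : u ∈ t)
    (h : G.ReachableWithin s u v) : v ∈ t := by
  obtain ⟨p, hp⟩ := h
  induction p with
  | nil => exact hu
  | cons hab _ ih =>
    exact ih (ht _ _ hu (hp _ (by simp)) hab) fun x hx => hp x (by simp [hx])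

end ReachableWithin

lemma reachableWithin_of_reachable {H : SimpleGraph V} {s : Set V} {u v : V}
    (hs : ∀ z w, z ∈ s → H.Adj z w → w ∈ s ∧ G.Adj z w) (hu : u ∈ s)
    (h : H.Reachable u v) :
    G.ReachableWithin s u v := by
  obtain ⟨p⟩ := h
  induction p with
  | nil => exact .refl hu
  | cons hab _ ih =>
    obtain ⟨hb, hG⟩ := hs _ _ hu hab
    exact (ReachableWithin.of_adj hG hu hb).trans (ih hb)

lemma ncard_setOf_adj [Fintype V] (G : SimpleGraph V) [DecidableRel G.Adj] :
    {p : V × V | G.Adj p.1 p.2}.ncard = ∑ v, G.degree v := by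
  rw [← dart_card_eq_sum_degrees, ← Nat.card_coe_set_eq, ← Nat.card_eq_fintype_card]
  exact Nat.card_congr
    ⟨fun p => ⟨p.1, p.2⟩, fun d => ⟨d.toProd, d.adj⟩, fun _ => rfl, fun _ => rfl⟩

end SimpleGraph

namespace ChainMap

open SimpleGraph

section

variable {n : ℕ} {GS : SimpleGraph (Fin n)}

lemma isGreatest_entry (C : GS.ConnectedComponent) : IsGreatest C.supp (entry GS C) := by
  have h := Finset.isGreatest_max' (Set.toFinite C.supp).toFinset
  rw [Set.Finite.coe_toFinset] at h
  exact h _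

lemma entry_mem_supp (C : GS.ConnectedComponent) : entry GS C ∈ C.supp :=
  (isGreatest_entry C).1

lemma le_entry {C : GS.ConnectedComponent} {x : Fin n} (hx : x ∈ C.supp) : x ≤ entry GS C :=
  (isGreatest_entry C).2 hx

lemma connectedComponentMk_entry (C : GS.ConnectedComponent) :
    GS.connectedComponentMk (entry GS C) = C :=
  entry_mem_supp C

lemma entry_injective : Function.Injective (entry GS) := fun C D h => by
  rw [← connectedComponentMk_entry C, h, connectedComponentMk_entry]

lemma adj_entry_exitV {C : GS.ConnectedComponent} (h : 0 < GS.degree (entry GS C)) :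
    GS.Adj (entry GS C) (exitV GS C) := by
  have hne : (Set.toFinite (GS.neighborSet (entry GS C))).toFinset.Nonempty := by
    obtain ⟨w, hw⟩ := (GS.degree_pos_iff_exists_adj _).mp h
    exact ⟨w, by simpa using hw⟩
  have hexit :
      exitV GS C = (Set.toFinite (GS.neighborSet (entry GS C))).toFinset.max' hne := by
    rw [exitV, ← Finset.coe_max' hne]
    rfl
  simpa [hexit] using Finset.max'_mem _ hne

lemma exitV_mem_supp {C : GS.ConnectedComponent} (h : 0 < GS.degree (entry GS C)) :
    exitV GS C ∈ C.supp := by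
  rw [ConnectedComponent.mem_supp_iff,
    ← ConnectedComponent.connectedComponentMk_eq_of_adj (adj_entry_exitV h),
    connectedComponentMk_entry]

lemma exitV_ne_entry {C : GS.ConnectedComponent} (h : 0 < GS.degree (entry GS C)) :
    exitV GS C ≠ entry GS C :=
  (adj_entry_exitV h).ne'

lemma entry_nextComp_isLeast_of_exists {C : GS.ConnectedComponent}
    (h : ∃ D, entry GS C < entry GS D) :
    IsLeast (entry GS '' {D | entry GS C < entry GS D}) (entry GS (nextComp GS C)) := by
  let : Fintype GS.ConnectedComponent := Fintype.ofFinite _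
  have hb : (Finset.univ.filter fun D => entry GS C < entry GS D).Nonempty := by
    obtain ⟨D, hD⟩ := h
    exact ⟨D, by simpa using hD⟩
  unfold nextComp
  rw [dif_pos hb]
  obtain ⟨D, -, hD⟩ := Finset.mem_image.mp (Finset.min'_mem _ (hb.image (entry GS)))
  rw [← hD, connectedComponentMk_entry, hD]
  simpa using Finset.isLeast_min' _ (hb.image (entry GS))

lemma entry_nextComp_isLeast_of_forall {C : GS.ConnectedComponent}
    (h : ∀ D, entry GS D ≤ entry GS C) :
    IsLeast (Set.range (entry GS)) (entry GS (nextComp GS C)) := by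
  let : Fintype GS.ConnectedComponent := Fintype.ofFinite _
  have hb : ¬ (Finset.univ.filter fun D => entry GS C < entry GS D).Nonempty := by
    simpa using h
  unfold nextComp
  rw [dif_neg hb]
  have hne : (Finset.univ.image (entry GS)).Nonempty :=
    (Finset.univ_nonempty_iff.mpr ⟨C⟩).image _
  obtain ⟨D, -, hD⟩ := Finset.mem_image.mp (Finset.min'_mem _ hne)
  rw [← hD, connectedComponentMk_entry, hD]
  simpa using Finset.isLeast_min' _ hne

lemma entry_lt_entry_nextComp {C : GS.ConnectedComponent} (h : ∃ D, entry GS C < entry GS D) :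
    entry GS C < entry GS (nextComp GS C) := by
  obtain ⟨D, hD, he⟩ := (entry_nextComp_isLeast_of_exists h).1
  exact he ▸ hD

lemma exists_ne_of_not_connected (hdis : ¬ GS.Connected) (C : GS.ConnectedComponent) :
    ∃ D, D ≠ C := by
  by_contra! h
  refine hdis (connected_iff_exists_forall_reachable _ |>.mpr ⟨entry GS C, fun v => ?_⟩)
  exact ConnectedComponent.exact ((connectedComponentMk_entry C).trans (h _).symm)

lemma nextComp_ne (hdis : ¬ GS.Connected) (C : GS.ConnectedComponent) : nextComp GS C ≠ C := by
  intro hC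
  by_cases hmax : ∃ D, entry GS C < entry GS D
  · exact (entry_lt_entry_nextComp hmax).ne (by rw [hC])
  · push Not at hmax
    obtain ⟨D, hD⟩ := exists_ne_of_not_connected hdis C
    have hle := (entry_nextComp_isLeast_of_forall hmax).2 ⟨D, rfl⟩
    rw [hC] at hle
    exact hD (entry_injective (le_antisymm (hmax D) hle))

def compEntry (GS : SimpleGraph (Fin n)) (z : Fin n) : Fin n :=
  entry GS (GS.connectedComponentMk z)

lemma chainMap_adj {x y : Fin n} : (chainMap GS).Adj x y ↔
    (GS.Adj x y ∧ ¬ ∃ C, s(x, y) = s(entry GS C, exitV GS C)) ∨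
      ((∃ C, s(x, y) = s(exitV GS C, entry GS (nextComp GS C))) ∧ x ≠ y) := by
  simp [chainMap]

lemma connectedComponentMk_ne_of_eq_chainEdge (hpos : ∀ v, 0 < GS.degree v)
    (hdis : ¬ GS.Connected) {x y : Fin n} {C : GS.ConnectedComponent}
    (he : s(x, y) = s(exitV GS C, entry GS (nextComp GS C))) :
    GS.connectedComponentMk x ≠ GS.connectedComponentMk y := by
  have hne : C ≠ nextComp GS C := (nextComp_ne hdis C).symm
  have h1 : GS.connectedComponentMk (exitV GS C) = C := exitV_mem_supp (hpos _)
  have h2 := connectedComponentMk_entry (nextComp GS C)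
  rcases Sym2.eq_iff.mp he with ⟨rfl, rfl⟩ | ⟨rfl, rfl⟩
  · rwa [h1, h2]
  · rw [h1, h2]; exact hne.symm

lemma eq_of_mem_supp_of_eq_bridgeEdge (hpos : ∀ v, 0 < GS.degree v) {x y : Fin n}
    {C D : GS.ConnectedComponent} (hx : x ∈ C.supp)
    (he : s(x, y) = s(entry GS D, exitV GS D)) : D = C := by
  rcases Sym2.eq_iff.mp he with ⟨rfl, -⟩ | ⟨rfl, -⟩
  · exact (connectedComponentMk_entry D).symm.trans hx
  · exact (exitV_mem_supp (hpos _) : _ = D).symm.trans hx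

lemma chainMap_adj_exitV (hpos : ∀ v, 0 < GS.degree v) (hdis : ¬ GS.Connected)
    (C : GS.ConnectedComponent) : (chainMap GS).Adj (exitV GS C) (entry GS (nextComp GS C)) :=
  chainMap_adj.mpr <| .inr ⟨⟨C, rfl⟩, fun h =>
    connectedComponentMk_ne_of_eq_chainEdge hpos hdis (C := C) rfl (congrArg _ h)⟩

lemma chainMap_adj_iff_of_mem_supp (hpos : ∀ v, 0 < GS.degree v) (hdis : ¬ GS.Connected)
    {C : GS.ConnectedComponent} {x y : Fin n} (hx : x ∈ C.supp) (hy : y ∈ C.supp) :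
    (chainMap GS).Adj x y ↔ GS.Adj x y ∧ s(x, y) ≠ s(entry GS C, exitV GS C) := by
  rw [chainMap_adj]
  constructor
  · rintro (⟨hadj, hb⟩ | ⟨⟨D, hD⟩, -⟩)
    · exact ⟨hadj, fun h => hb ⟨C, h⟩⟩
    · exact absurd (hx.trans hy.symm) (connectedComponentMk_ne_of_eq_chainEdge hpos hdis hD)
  · rintro ⟨hadj, hb⟩
    refine .inl ⟨hadj, fun ⟨D, hD⟩ => hb ?_⟩
    rwa [eq_of_mem_supp_of_eq_bridgeEdge hpos hx hD] at hD

lemma exists_eq_chainEdge_of_chainMap_adj {x y : Fin n} (h : (chainMap GS).Adj x y)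
    (hxy : GS.connectedComponentMk x ≠ GS.connectedComponentMk y) :
    ∃ C, s(x, y) = s(exitV GS C, entry GS (nextComp GS C)) := by
  rcases chainMap_adj.mp h with ⟨hadj, -⟩ | ⟨hC, -⟩
  · exact absurd (ConnectedComponent.connectedComponentMk_eq_of_adj hadj) hxy
  · exact hC

lemma eq_exitV_of_chainMap_adj (hpos : ∀ v, 0 < GS.degree v) {C : GS.ConnectedComponent}
    {x y : Fin n} (hx : x ∈ C.supp) (hy : y ∉ C.supp) (h : (chainMap GS).Adj x y)
    (hxe : x ≠ entry GS C) : x = exitV GS C := by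
  obtain ⟨D, hD⟩ := exists_eq_chainEdge_of_chainMap_adj h fun h => hy (h.symm.trans hx)
  rcases Sym2.eq_iff.mp hD with ⟨rfl, -⟩ | ⟨rfl, -⟩
  · have hDC : D = C := (exitV_mem_supp (hpos _) : _ = D).symm.trans hx
    rw [hDC]
  · have hDC : nextComp GS D = C := (connectedComponentMk_entry _).symm.trans hx
    exact absurd (by rw [hDC]) hxe

lemma chainEdge_injective (hpos : ∀ v, 0 < GS.degree v) {C D : GS.ConnectedComponent}
    (h : s(exitV GS C, entry GS (nextComp GS C)) = s(exitV GS D, entry GS (nextComp GS D))) :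
    C = D := by
  have hC : GS.connectedComponentMk (exitV GS C) = C := exitV_mem_supp (hpos _)
  rcases Sym2.eq_iff.mp h with ⟨he, -⟩ | ⟨he, -⟩
  · rw [← hC, he]
    exact exitV_mem_supp (hpos _)
  · have hCD : nextComp GS D = C := by rw [← hC, he, connectedComponentMk_entry]
    exact absurd (he.trans (by rw [hCD])) (exitV_ne_entry (hpos _))

lemma chainMap_eq_self_of_connected (hpos : ∀ v, 0 < GS.degree v)
    (hcon : GS.Connected) : chainMap GS = GS := by
  have := hcon.preconnected.subsingleton_connectedComponent
  have hnext (C : GS.ConnectedComponent) : nextComp GS C = C := Subsingleton.elim _ _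
  ext x y
  simp only [chainMap_adj, hnext]
  constructor
  · rintro (⟨h, -⟩ | ⟨⟨C, hC⟩, -⟩)
    · exact h
    · rw [← mem_edgeSet, hC, Sym2.eq_swap, mem_edgeSet]
      exact adj_entry_exitV (hpos _)
  · intro h
    by_cases hb : ∃ C, s(x, y) = s(entry GS C, exitV GS C)
    · obtain ⟨C, hC⟩ := hb
      exact .inr ⟨⟨C, hC.trans Sym2.eq_swap⟩, h.ne⟩
    · exact .inl ⟨h, hb⟩

end

section

variable {n : ℕ} {GS₁ GS₂ : SimpleGraph (Fin n)}

lemma supp_eq_of_compEntry_eq (h : compEntry GS₁ = compEntry GS₂) (x : Fin n) :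
    (GS₁.connectedComponentMk x).supp = (GS₂.connectedComponentMk x).supp := by
  ext z
  simp only [ConnectedComponent.mem_supp_iff, ← entry_injective.eq_iff]
  change compEntry GS₁ z = compEntry GS₁ x ↔ compEntry GS₂ z = compEntry GS₂ x
  rw [h]

lemma adj_of_compEntry_eq (hpos₁ : ∀ v, 0 < GS₁.degree v) (hdis₁ : ¬ GS₁.Connected)
    (hpos₂ : ∀ v, 0 < GS₂.degree v) (hdis₂ : ¬ GS₂.Connected)
    (hmap : chainMap GS₁ = chainMap GS₂) (hc : compEntry GS₁ = compEntry GS₂) {x y : Fin n}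
    (h : GS₁.Adj x y) : GS₂.Adj x y := by
  set C₁ := GS₁.connectedComponentMk x
  set C₂ := GS₂.connectedComponentMk x
  have hss : C₁.supp = C₂.supp := supp_eq_of_compEntry_eq hc x
  have hx : x ∈ C₁.supp := rfl
  have hy : y ∈ C₁.supp := (ConnectedComponent.connectedComponentMk_eq_of_adj h).symm
  have hentry : entry GS₁ C₁ = entry GS₂ C₂ := congrFun hc x
  have hexit : exitV GS₁ C₁ = exitV GS₂ C₂ := by
    have hout : entry GS₁ (nextComp GS₁ C₁) ∉ C₂.supp := fun hmem =>
      nextComp_ne hdis₁ C₁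
        ((connectedComponentMk_entry _).symm.trans (show _ ∈ C₁.supp from hss ▸ hmem))
    exact eq_exitV_of_chainMap_adj hpos₂ (hss ▸ exitV_mem_supp (hpos₁ _)) hout
      (hmap ▸ chainMap_adj_exitV hpos₁ hdis₁ C₁) (hentry ▸ exitV_ne_entry (hpos₁ _))
  by_cases hb : s(x, y) = s(entry GS₁ C₁, exitV GS₁ C₁)
  · rw [← mem_edgeSet, hb, hentry, hexit, mem_edgeSet]
    exact adj_entry_exitV (hpos₂ _)
  · have hG := (chainMap_adj_iff_of_mem_supp hpos₁ hdis₁ hx hy).mpr ⟨h, hb⟩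
    rw [hmap] at hG
    exact ((chainMap_adj_iff_of_mem_supp hpos₂ hdis₂ (hss ▸ hx) (hss ▸ hy)).mp hG).1

lemma eq_of_compEntry_eq (hpos₁ : ∀ v, 0 < GS₁.degree v) (hdis₁ : ¬ GS₁.Connected)
    (hpos₂ : ∀ v, 0 < GS₂.degree v) (hdis₂ : ¬ GS₂.Connected)
    (hmap : chainMap GS₁ = chainMap GS₂) (hc : compEntry GS₁ = compEntry GS₂) :
    GS₁ = GS₂ := by
  ext x y
  exact ⟨adj_of_compEntry_eq hpos₁ hdis₁ hpos₂ hdis₂ hmap hc,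
    adj_of_compEntry_eq hpos₂ hdis₂ hpos₁ hdis₁ hmap.symm hc.symm⟩

end

variable {n : ℕ} {GS GS₁ GS₂ : SimpleGraph (Fin (n + 1))}

/- Components are ordered by their entry vertices, so `topComp GS` is the last component `H_k`,
`nextComp GS (topComp GS)` is the first one `H_1`, and `s(lastExit GS, firstEntry GS)` is the
closing chain edge `v_k' v_1`. -/
def topComp (GS : SimpleGraph (Fin (n + 1))) : GS.ConnectedComponent :=
  GS.connectedComponentMk (Fin.last n)

def firstEntry (GS : SimpleGraph (Fin (n + 1))) : Fin (n + 1) :=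
  entry GS (nextComp GS (topComp GS))

def lastExit (GS : SimpleGraph (Fin (n + 1))) : Fin (n + 1) :=
  exitV GS (topComp GS)

lemma entry_topComp : entry GS (topComp GS) = Fin.last n :=
  le_antisymm (Fin.le_last _) (le_entry rfl)

lemma firstEntry_le_entry (D : GS.ConnectedComponent) : firstEntry GS ≤ entry GS D :=
  (entry_nextComp_isLeast_of_forall fun _ => entry_topComp ▸ Fin.le_last _).2 ⟨D, rfl⟩

lemma entry_lt_last {C : GS.ConnectedComponent} (hC : C ≠ topComp GS) :
    entry GS C < Fin.last n :=
  (Fin.le_last _).lt_of_ne fun h => hC (entry_injective (h.trans entry_topComp.symm))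

lemma entry_lt_entry_nextComp_of_ne_topComp {C : GS.ConnectedComponent} (hC : C ≠ topComp GS) :
    entry GS C < entry GS (nextComp GS C) :=
  entry_lt_entry_nextComp ⟨topComp GS, entry_topComp ▸ entry_lt_last hC⟩

lemma firstEntry_lt_last (hdis : ¬ GS.Connected) : firstEntry GS < Fin.last n := by
  obtain ⟨D, hD⟩ := exists_ne_of_not_connected hdis (topComp GS)
  exact (firstEntry_le_entry D).trans_lt (entry_lt_last hD)

lemma firstEntry_eq_last (hcon : GS.Connected) : firstEntry GS = Fin.last n := by
  have := hcon.preconnected.subsingleton_connectedComponent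
  rw [firstEntry, Subsingleton.elim (nextComp GS (topComp GS)) (topComp GS), entry_topComp]

lemma exists_nextComp_eq {C : GS.ConnectedComponent} (hC : entry GS C ≠ firstEntry GS) :
    ∃ P, entry GS P < entry GS C ∧ nextComp GS P = C := by
  have hlt : firstEntry GS < entry GS C := (firstEntry_le_entry C).lt_of_ne hC.symm
  obtain ⟨P, hP, hmax⟩ := Set.exists_max_image {D | entry GS D < entry GS C} (entry GS)
    (Set.toFinite _) ⟨_, hlt⟩
  have hle := (entry_nextComp_isLeast_of_exists ⟨C, hP⟩).2 ⟨C, hP, rfl⟩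
  have hnext := entry_lt_entry_nextComp ⟨C, hP⟩
  refine ⟨P, hP, entry_injective (hle.antisymm (not_lt.mp fun h => ?_))⟩
  exact (hmax _ h).not_gt hnext

def openChain (GS : SimpleGraph (Fin (n + 1))) : SimpleGraph (Fin (n + 1)) :=
  (chainMap GS).deleteEdges {s(lastExit GS, firstEntry GS)}

lemma openChain_adj_exitV (hpos : ∀ v, 0 < GS.degree v) (hdis : ¬ GS.Connected)
    {C : GS.ConnectedComponent} (hC : C ≠ topComp GS) :
    (openChain GS).Adj (exitV GS C) (entry GS (nextComp GS C)) :=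
  deleteEdges_adj.mpr ⟨chainMap_adj_exitV hpos hdis C, fun h => hC (chainEdge_injective hpos h)⟩

lemma openChain_adj_of_adj_of_mem_supp (hpos : ∀ v, 0 < GS.degree v) (hdis : ¬ GS.Connected)
    {C : GS.ConnectedComponent} {x y : Fin (n + 1)} (hx : x ∈ C.supp) (hadj : GS.Adj x y)
    (hb : s(x, y) ≠ s(entry GS C, exitV GS C)) : (openChain GS).Adj x y := by
  have hy : y ∈ C.supp := (ConnectedComponent.connectedComponentMk_eq_of_adj hadj).symm.trans hx
  refine deleteEdges_adj.mpr
    ⟨(chainMap_adj_iff_of_mem_supp hpos hdis hx hy).mpr ⟨hadj, hb⟩, fun h => ?_⟩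
  exact connectedComponentMk_ne_of_eq_chainEdge hpos hdis h (hx.trans hy.symm)

lemma reachableWithin_supp_entry (hpos : ∀ v, 0 < GS.degree v)
    (heven : ∀ v, Even (GS.degree v)) (hdis : ¬ GS.Connected) {C : GS.ConnectedComponent}
    {z : Fin (n + 1)} (hz : z ∈ C.supp) :
    (openChain GS).ReachableWithin C.supp (entry GS C) z := by
  have hb := not_isBridge_of_forall_even_degree heven (adj_entry_exitV (hpos (entry GS C)))
  have hreach : GS.Reachable (entry GS C) z :=
    ConnectedComponent.exact ((connectedComponentMk_entry C).trans hz.symm)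
  refine reachableWithin_of_reachable ?_ (entry_mem_supp C)
    (hreach.deleteEdges_of_not_isBridge hb)
  intro a b ha hab
  obtain ⟨hadj, hne⟩ := deleteEdges_adj.mp hab
  exact ⟨(ConnectedComponent.connectedComponentMk_eq_of_adj hadj).symm.trans ha,
    openChain_adj_of_adj_of_mem_supp hpos hdis ha hadj hne⟩

lemma compEntry_le_of_openChain_adj (hpos : ∀ v, 0 < GS.degree v) {t z w : Fin (n + 1)}
    (h : (openChain GS).Adj z w) (hz : compEntry GS z ≤ t) (hw : w ≤ t) :
    compEntry GS w ≤ t := by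
  obtain ⟨hadj, hne⟩ := deleteEdges_adj.mp h
  by_cases hzw : GS.connectedComponentMk z = GS.connectedComponentMk w
  · rwa [compEntry, ← hzw]
  obtain ⟨D, hD⟩ := exists_eq_chainEdge_of_chainMap_adj hadj hzw
  rcases Sym2.eq_iff.mp hD with ⟨-, rfl⟩ | ⟨rfl, rfl⟩
  · rwa [compEntry, connectedComponentMk_entry]
  · -- the chain edge of `D`, crossed backwards: it is not the deleted one, so `D ≠ H_k`
    have hDtop : D ≠ topComp GS := by
      rintro rfl
      exact hne Sym2.eq_swap
    calc compEntry GS (exitV GS D) = entry GS D := by rw [compEntry, exitV_mem_supp (hpos _)]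
      _ ≤ entry GS (nextComp GS D) := (entry_lt_entry_nextComp_of_ne_topComp hDtop).le
      _ = compEntry GS (entry GS (nextComp GS D)) := by
        rw [compEntry, connectedComponentMk_entry]
      _ ≤ t := hz

lemma reachableWithin_firstEntry_entry (hpos : ∀ v, 0 < GS.degree v)
    (heven : ∀ v, Even (GS.degree v)) (hdis : ¬ GS.Connected) (C : GS.ConnectedComponent) :
    (openChain GS).ReachableWithin (Set.Iic (entry GS C)) (firstEntry GS) (entry GS C) := by
  induction hC : entry GS C using WellFoundedLT.induction generalizing C with
  | _ v ih =>
    subst hC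
    by_cases hfirst : entry GS C = firstEntry GS
    · rw [hfirst]
      exact .refl Set.self_mem_Iic
    obtain ⟨P, hP, rfl⟩ := exists_nextComp_eq hfirst
    have hPtop : P ≠ topComp GS := by
      rintro rfl
      exact hfirst rfl
    have hsupp : P.supp ⊆ Set.Iic (entry GS (nextComp GS P)) :=
      fun x hx => (le_entry hx).trans hP.le
    have hexit := exitV_mem_supp (hpos (entry GS P))
    have hto_entry := (ih _ hP P rfl).mono (Set.Iic_subset_Iic.mpr hP.le)
    have hto_exit := (reachableWithin_supp_entry hpos heven hdis hexit).mono hsupp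
    have hchain : (openChain GS).ReachableWithin (Set.Iic (entry GS (nextComp GS P)))
        (exitV GS P) (entry GS (nextComp GS P)) :=
      .of_adj (openChain_adj_exitV hpos hdis hPtop) (hsupp hexit) Set.self_mem_Iic
    exact (hto_entry.trans hto_exit).trans hchain

theorem reachableWithin_openChain_iff (hpos : ∀ v, 0 < GS.degree v)
    (heven : ∀ v, Even (GS.degree v)) (hdis : ¬ GS.Connected) (t z : Fin (n + 1)) :
    (openChain GS).ReachableWithin (Set.Iic t) (firstEntry GS) z ↔ compEntry GS z ≤ t := by
  constructor
  · intro h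
    refine h.mem_of_adj_closed (t := {w | compEntry GS w ≤ t})
      (fun z w hz hw hzw => compEntry_le_of_openChain_adj hpos hzw hz hw) ?_
    simpa [compEntry, firstEntry, connectedComponentMk_entry] using h.left_mem
  · intro h
    have hto_entry := reachableWithin_firstEntry_entry hpos heven hdis (GS.connectedComponentMk z)
    have hto_z := (reachableWithin_supp_entry hpos heven hdis (C := GS.connectedComponentMk z)
      rfl).mono fun x hx => le_entry hx
    exact (hto_entry.trans hto_z).mono (Set.Iic_subset_Iic.mpr h)

lemma compEntry_eq_of_chainMap_eq (hpos₁ : ∀ v, 0 < GS₁.degree v)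
    (heven₁ : ∀ v, Even (GS₁.degree v)) (hdis₁ : ¬ GS₁.Connected)
    (hpos₂ : ∀ v, 0 < GS₂.degree v) (heven₂ : ∀ v, Even (GS₂.degree v))
    (hdis₂ : ¬ GS₂.Connected) (hmap : chainMap GS₁ = chainMap GS₂)
    (ha : lastExit GS₁ = lastExit GS₂) (hv : firstEntry GS₁ = firstEntry GS₂) :
    compEntry GS₁ = compEntry GS₂ := by
  have hopen : openChain GS₁ = openChain GS₂ := by rw [openChain, openChain, hmap, ha, hv]
  funext z
  have key (t : Fin (n + 1)) : compEntry GS₁ z ≤ t ↔ compEntry GS₂ z ≤ t := by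
    rw [← reachableWithin_openChain_iff hpos₁ heven₁ hdis₁,
      ← reachableWithin_openChain_iff hpos₂ heven₂ hdis₂, hopen, hv]
  exact le_antisymm ((key _).mpr le_rfl) ((key _).mp le_rfl)

lemma chainMap_adj_lastExit_firstEntry (hpos : ∀ v, 0 < GS.degree v) :
    (chainMap GS).Adj (lastExit GS) (firstEntry GS) := by
  by_cases hcon : GS.Connected
  · have := hcon.preconnected.subsingleton_connectedComponent
    rw [chainMap_eq_self_of_connected hpos hcon, firstEntry,
      Subsingleton.elim (nextComp GS _) (topComp GS)]
    exact (adj_entry_exitV (hpos _)).symm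
  · exact chainMap_adj_exitV hpos hcon _

theorem eq_of_chainMap_eq (hpos₁ : ∀ v, 0 < GS₁.degree v)
    (heven₁ : ∀ v, Even (GS₁.degree v))
    (hpos₂ : ∀ v, 0 < GS₂.degree v) (heven₂ : ∀ v, Even (GS₂.degree v))
    (hmap : chainMap GS₁ = chainMap GS₂) (ha : lastExit GS₁ = lastExit GS₂)
    (hv : firstEntry GS₁ = firstEntry GS₂) : GS₁ = GS₂ := by
  by_cases hcon₁ : GS₁.Connected <;> by_cases hcon₂ : GS₂.Connected
  · rw [← chainMap_eq_self_of_connected hpos₁ hcon₁, hmap,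
      chainMap_eq_self_of_connected hpos₂ hcon₂]
  · exact absurd (hv ▸ firstEntry_eq_last hcon₁) (firstEntry_lt_last hcon₂).ne
  · exact absurd (hv ▸ firstEntry_eq_last hcon₂) (firstEntry_lt_last hcon₁).ne
  · exact eq_of_compEntry_eq hpos₁ hcon₁ hpos₂ hcon₂ hmap <|
      compEntry_eq_of_chainMap_eq hpos₁ heven₁ hcon₁ hpos₂ heven₂ hcon₂ hmap ha hv

end ChainMap

theorem chainMap_preimage_bound_general (r n : ℕ) (hr : 2 ≤ r) (hn : 2 * r + 1 ≤ n)
    (G : SimpleGraph (Fin n)) (hGreg : G.IsRegularOfDegree (2 * r)) :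
    Set.ncard {GS : SimpleGraph (Fin n) |
        GS.IsRegularOfDegree (2 * r) ∧ chainMap GS = G} ≤ 2 * r * n := by
  obtain ⟨m, rfl⟩ : ∃ m, n = m + 1 := ⟨n - 1, by omega⟩
  have hdeg {GS : SimpleGraph (Fin (m + 1))} (hreg : GS.IsRegularOfDegree (2 * r)) :
      (∀ v, 0 < GS.degree v) ∧ ∀ v, Even (GS.degree v) :=
    ⟨fun v => by rw [hreg.degree_eq]; omega, fun v => hreg.degree_eq v ▸ even_two_mul r⟩
  calc _ ≤ {p : Fin (m + 1) × Fin (m + 1) | G.Adj p.1 p.2}.ncard := by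
        refine Set.ncard_le_ncard_of_injOn
          (fun GS => (ChainMap.lastExit GS, ChainMap.firstEntry GS)) ?_ ?_ (Set.toFinite _)
        · rintro GS ⟨hreg, rfl⟩
          exact ChainMap.chainMap_adj_lastExit_firstEntry (hdeg hreg).1
        · rintro GS₁ ⟨h₁, hmap₁⟩ GS₂ ⟨h₂, hmap₂⟩ he
          exact ChainMap.eq_of_chainMap_eq (hdeg h₁).1 (hdeg h₁).2 (hdeg h₂).1 (hdeg h₂).2
            (hmap₁.trans hmap₂.symm) (congrArg Prod.fst he) (congrArg Prod.snd he)
    _ = 2 * r * (m + 1) := by simp [G.ncard_setOf_adj, hGreg.degree_eq, mul_comm]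

/-- Let `r ≥ 2` and `n ≥ max{8, 2r+1}`, let `Ω_S` be the set of all
`2r`-regular simple graphs on `{1,…,n}` and `Ω_F` the subset of connected such graphs,
and let `h : Ω_S → Ω_F` be the chaining map.  Then for every `G ∈ Ω_F` the number of
preimages satisfies `|h⁻¹(G)| ≤ 2rn`. -/
theorem chainMap_preimage_bound (r n : ℕ) (hr : 2 ≤ r) (h8 : 8 ≤ n) (hn : 2 * r + 1 ≤ n)
    (G : SimpleGraph (Fin n)) (hG : G.Connected) (hGreg : G.IsRegularOfDegree (2 * r)) :
    Set.ncard {GS : SimpleGraph (Fin n) |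
        GS.IsRegularOfDegree (2 * r) ∧ chainMap GS = G} ≤ 2 * r * n :=
  chainMap_preimage_bound_general r n hr hn G hGreg
end
end
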